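/- arXiv:0903.0909 — 7 statements merged into one kernel-verified Lean document; each statement's English description precedes it below -/
import Mathlib

section
/- Under the density hypothesis (DH), if in addition the densities satisfy α_t(θ) = α_θ(θ) almost surely for all 0 ≤ θ ≤ t ≤ T, then for every t ∈ [0,T] one has P[τ ≤ t | F_t] = P[τ ≤ t | F_T] almost surely (the immersion, or H-hypothesis, property of the conditional law on [0,t]). -/
open MeasureTheory Set Filter

/-- Under the density hypothesis (DH), if furthermore `α_t(θ) = α_θ(θ)` a.s.
for all `0 ≤ θ ≤ t ≤ T`, then for every `t ∈ [0,T]` one has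
`P[τ ≤ t | F_t] = P[τ ≤ t | F_T]` almost surely (the immersion / H-hypothesis property of the
conditional law on `[0,t]`). -/
theorem stmt2
    {Ω : Type*} {m0 : MeasurableSpace Ω} (μ : Measure Ω) [IsProbabilityMeasure μ]
    (T : ℝ) (hT : 0 < T)
    -- the filtration F
    (F : ℝ → MeasurableSpace Ω) (hF_le : ∀ t, F t ≤ m0)
    (hF_mono : ∀ s t : ℝ, s ≤ t → F s ≤ F t)
    -- the default time τ, a nonnegative random variable
    (τ : Ω → ℝ) (hτ_meas : Measurable τ) (hτ_nonneg : ∀ ω, 0 ≤ τ ω)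
    -- the density family α
    (α : ℝ → ℝ → Ω → ℝ)
    (hα_meas : ∀ t, Measurable[(F t).prod (borel ℝ)] (fun p : Ω × ℝ => α t p.2 p.1))
    (hα_pos : ∀ t θ ω, 0 < α t θ ω)
    (hα_int : ∀ t ∈ Icc (0:ℝ) T, ∀ᵐ ω ∂μ, IntegrableOn (fun θ => α t θ ω) (Ici 0) volume)
    -- the density hypothesis (DH)
    (hDH : ∀ t ∈ Icc (0:ℝ) T, ∀ A : Set ℝ, MeasurableSet A → A ⊆ Ici 0 →
      ∀ᵐ ω ∂μ,
        (μ[({ω' | τ ω' ∈ A}).indicator (fun _ => (1:ℝ)) | F t]) ω = ∫ θ in A, α t θ ω)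
    -- the additional hypothesis: α_t(θ) = α_θ(θ) a.s. for 0 ≤ θ ≤ t ≤ T
    (hH : ∀ θ t : ℝ, 0 ≤ θ → θ ≤ t → t ≤ T → ∀ᵐ ω ∂μ, α t θ ω = α θ θ ω) :
    ∀ t ∈ Icc (0:ℝ) T,
      μ[({ω' | τ ω' ≤ t}).indicator (fun _ => (1:ℝ)) | F t]
        =ᵐ[μ] μ[({ω' | τ ω' ≤ t}).indicator (fun _ => (1:ℝ)) | F T] := by
  intro t ht
  have hA : MeasurableSet (Icc (0:ℝ) t) := measurableSet_Icc
  have hsub : Icc (0:ℝ) t ⊆ Ici 0 := fun x hx => hx.1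
  have hset : {ω' | τ ω' ≤ t} = {ω' | τ ω' ∈ Icc 0 t} := by
    ext ω; simp [mem_Icc, hτ_nonneg ω]
  have h1 := hDH t ht (Icc 0 t) hA hsub
  have h2 := hDH T ⟨hT.le, le_rfl⟩ (Icc 0 t) hA hsub
  -- measurability of the difference on ℝ × Ω
  have hle : ∀ u : ℝ, (F u).prod (borel ℝ) ≤ m0.prod (borel ℝ) := fun u =>
    sup_le_sup (MeasurableSpace.comap_mono (hF_le u)) le_rfl
  have hb : (borel ℝ) = (inferInstance : MeasurableSpace ℝ) := rfl
  have hmt : Measurable (fun p : ℝ × Ω => α t p.1 p.2) := by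
    have := ((hα_meas t).mono (hle t) le_rfl).comp measurable_swap
    exact this
  have hmT : Measurable (fun p : ℝ × Ω => α T p.1 p.2) := by
    have := ((hα_meas T).mono (hle T) le_rfl).comp measurable_swap
    exact this
  set s : Set (ℝ × Ω) := {p : ℝ × Ω | α t p.1 p.2 ≠ α T p.1 p.2} with hs_def
  have hs_meas : MeasurableSet s := by
    have : s = (fun p : ℝ × Ω => α t p.1 p.2 - α T p.1 p.2) ⁻¹' ({0}ᶜ) := by
      ext p; simp [hs_def, sub_eq_zero]
    rw [this]
    exact (hmt.sub hmT) (measurableSet_singleton 0).compl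
  have hs_null : ((volume.restrict (Icc 0 t)).prod μ) s = 0 := by
    rw [Measure.measure_prod_null hs_meas]
    show ∀ᵐ θ ∂(volume.restrict (Icc 0 t)), μ (Prod.mk θ ⁻¹' s) = 0
    rw [ae_restrict_iff' hA]
    filter_upwards with θ hθ
    have h := (hH θ t hθ.1 hθ.2 ht.2).and (hH θ T hθ.1 (hθ.2.trans ht.2) le_rfl)
    have h' : ∀ᵐ ω ∂μ, α t θ ω = α T θ ω := by
      filter_upwards [h] with ω hω; rw [hω.1, hω.2]
    have : Prod.mk θ ⁻¹' s = {ω | α t θ ω ≠ α T θ ω} := rfl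
    rw [this]
    exact h'
  have hswap : (μ.prod (volume.restrict (Icc 0 t))) (Prod.swap ⁻¹' s) = 0 := by
    rw [← Measure.map_apply measurable_swap hs_meas, Measure.prod_swap]
    exact hs_null
  have hkey : ∀ᵐ ω ∂μ, ∫ θ in Icc 0 t, α t θ ω = ∫ θ in Icc 0 t, α T θ ω := by
    have h := (Measure.measure_prod_null (measurable_swap hs_meas)).mp hswap
    filter_upwards [h] with ω hω
    refine integral_congr_ae ?_
    have : Prod.mk ω ⁻¹' (Prod.swap ⁻¹' s) = {θ | α t θ ω ≠ α T θ ω} := rfl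
    rw [this] at hω
    exact hω
  rw [hset]
  filter_upwards [h1, h2, hkey] with ω e1 e2 e3
  rw [e1, e2, ← e3]
end

section
/- Let G be a sub-σ-algebra of 𝒢, let Z and α be strictly positive random variables, and let x and ŷ be strictly positive G-measurable random variables such that X̂ := I(ŷ Z/α) satisfies E[Z X̂ | G] = x almost surely and E[U(X̂) α | G] is well defined. Then for every nonnegative random variable X with E[Z X | G] ≤ x almost surely and E[U(X) α | G] well defined, one has E[U(X) α | G] ≤ E[U(X̂) α | G] almost surely; that is, X̂ = I(ŷ Z/α) maximizes the conditional expected weighted utility over the budget set {X ≥ 0 : E[Z X | G] ≤ x}. -/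
open MeasureTheory Set Filter

/-- Tangent line inequality for concave functions on a set. -/
lemma concave_tangent_le {S : Set ℝ} {f : ℝ → ℝ} {f' s t : ℝ}
    (hf : ConcaveOn ℝ S f) (hs : s ∈ S) (ht : t ∈ S) (hd : HasDerivAt f f' t) :
    f s ≤ f t + f' * (s - t) := by
  have hneg : ConvexOn ℝ S (-f) := hf.neg
  have hdneg : HasDerivAt (-f) (-f') t := hd.neg
  rcases lt_trichotomy s t with h | h | h
  · have := hneg.slope_le_of_hasDerivAt hs ht h hdneg
    rw [slope_def_field] at this
    have hst : t - s > 0 := by linarith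
    rw [div_le_iff₀ hst] at this
    simp only [Pi.neg_apply] at this
    nlinarith
  · simp [h]
  · have := hneg.le_slope_of_hasDerivAt ht hs h hdneg
    rw [slope_def_field] at this
    have hst : s - t > 0 := by linarith
    rw [le_div_iff₀ hst] at this
    simp only [Pi.neg_apply] at this
    nlinarith

/-- For a utility `U` satisfying the Inada conditions with `I = (U')⁻¹`:
if `X̂ := I(ŷ Z/α)` satisfies `E[Z X̂ | G] = x` a.s., then `X̂` maximizes the conditional
expected weighted utility `E[U(X) α | G]` over the budget set `{X ≥ 0 : E[Z X | G] ≤ x}`. -/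
theorem stmt8
    {Ω : Type*} {m0 : MeasurableSpace Ω} (μ : Measure Ω) [IsProbabilityMeasure μ]
    (G' : MeasurableSpace Ω) (hG : G' ≤ m0)
    -- the utility function U, its derivative U', and I = (U')⁻¹
    (U U' I : ℝ → ℝ)
    (hU_mono : StrictMonoOn U (Ioi 0))
    (hU_conc : StrictConcaveOn ℝ (Ioi 0) U)
    (hU_deriv : ∀ x ∈ Ioi (0:ℝ), HasDerivAt U (U' x) x)
    (hU'_cont : ContinuousOn U' (Ioi 0))
    -- Inada conditions: U'(0⁺) = ∞ and U'(∞) = 0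
    (hInada0 : Tendsto U' (nhdsWithin 0 (Ioi 0)) atTop)
    (hInada_inf : Tendsto U' atTop (nhds 0))
    -- I is the inverse of U' on (0,∞), mapping (0,∞) to (0,∞)
    (hI_pos : ∀ y ∈ Ioi (0:ℝ), I y ∈ Ioi (0:ℝ))
    (hI_left : ∀ y ∈ Ioi (0:ℝ), U' (I y) = y)
    (hI_right : ∀ x ∈ Ioi (0:ℝ), I (U' x) = x)
    -- U is extended at 0 below its values on (0,∞)
    (hU_0 : ∀ x ∈ Ioi (0:ℝ), U 0 ≤ U x)
    -- the random variables
    (Z a x yhat : Ω → ℝ)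
    (hZ_pos : ∀ ω, 0 < Z ω) (ha_pos : ∀ ω, 0 < a ω)
    (hx_meas : Measurable[G'] x) (hx_pos : ∀ ω, 0 < x ω)
    (hyhat_meas : Measurable[G'] yhat) (hyhat_pos : ∀ ω, 0 < yhat ω)
    -- the candidate optimum X̂ = I(ŷ Z/α)
    (Xhat : Ω → ℝ) (hXhat : ∀ ω, Xhat ω = I (yhat ω * Z ω / a ω))
    (hXhat_budget_int : Integrable (fun ω => Z ω * Xhat ω) μ)
    (hXhat_budget : μ[fun ω => Z ω * Xhat ω | G'] =ᵐ[μ] x)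
    (hXhat_util_int : Integrable (fun ω => U (Xhat ω) * a ω) μ) :
    -- X̂ dominates every budget-feasible nonnegative X
    ∀ X : Ω → ℝ, (∀ ω, 0 ≤ X ω) →
      Integrable (fun ω => Z ω * X ω) μ →
      Integrable (fun ω => U (X ω) * a ω) μ →
      (∀ᵐ ω ∂μ, (μ[fun ω' => Z ω' * X ω' | G']) ω ≤ x ω) →
      ∀ᵐ ω ∂μ,
        (μ[fun ω' => U (X ω') * a ω' | G']) ω ≤ (μ[fun ω' => U (Xhat ω') * a ω' | G']) ω := by
  intro X hX_nonneg hX_budget_int hX_util_int hX_budget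
  -- positivity of the Lagrange multiplier y ω = yhat ω * Z ω / a ω and of Xhat
  have hy_pos : ∀ ω, 0 < yhat ω * Z ω / a ω := fun ω =>
    div_pos (mul_pos (hyhat_pos ω) (hZ_pos ω)) (ha_pos ω)
  have hXhat_pos : ∀ ω, 0 < Xhat ω := fun ω => by
    rw [hXhat ω]; exact hI_pos _ (hy_pos ω)
  have hU'Xhat : ∀ ω, U' (Xhat ω) = yhat ω * Z ω / a ω := fun ω => by
    rw [hXhat ω]; exact hI_left _ (hy_pos ω)
  -- tangent line inequality including the boundary value at 0
  have key_tangent : ∀ (s t : ℝ), 0 ≤ s → 0 < t → U s ≤ U t + U' t * (s - t) := by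
    intro s t hs ht
    rcases eq_or_lt_of_le hs with h | h
    · subst h
      -- limit argument: U 0 ≤ U ε ≤ U t + U' t (ε - t) for all ε > 0
      have htend : Tendsto (fun ε : ℝ => U t + U' t * (ε - t)) (nhdsWithin 0 (Ioi 0))
          (nhds (U t + U' t * (0 - t))) := by
        apply Tendsto.mono_left _ nhdsWithin_le_nhds
        have hc : Continuous (fun ε : ℝ => U t + U' t * (ε - t)) := by continuity
        simpa using hc.tendsto 0
      have hev : ∀ᶠ ε in nhdsWithin (0:ℝ) (Ioi 0), U 0 ≤ U t + U' t * (ε - t) := by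
        filter_upwards [self_mem_nhdsWithin] with ε hε
        exact le_trans (hU_0 ε hε)
          (concave_tangent_le hU_conc.concaveOn hε ht (hU_deriv t ht))
      have := ge_of_tendsto htend hev
      simpa using this
    · exact concave_tangent_le hU_conc.concaveOn h ht (hU_deriv t ht)
  -- pointwise key inequality, multiplied by a and rearranged
  have key : ∀ ω, U (X ω) * a ω - U (Xhat ω) * a ω ≤
      yhat ω * (Z ω * X ω - Z ω * Xhat ω) := by
    intro ω
    have h1 := key_tangent (X ω) (Xhat ω) (hX_nonneg ω) (hXhat_pos ω)
    rw [hU'Xhat ω] at h1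
    have ha := ha_pos ω
    have h2 : yhat ω * Z ω / a ω * (X ω - Xhat ω) * a ω
        = yhat ω * (Z ω * X ω - Z ω * Xhat ω) := by
      field_simp
    nlinarith [mul_le_mul_of_nonneg_right h1 ha.le]
  -- the difference of utilities
  set D : Ω → ℝ := fun ω => U (X ω) * a ω - U (Xhat ω) * a ω with hD_def
  have hD_int : Integrable D μ := hX_util_int.sub hXhat_util_int
  have hZD_int : Integrable (fun ω => Z ω * X ω - Z ω * Xhat ω) μ :=
    hX_budget_int.sub hXhat_budget_int
  -- truncation sets
  have hA : ∀ n : ℕ, MeasurableSet[G'] {ω | yhat ω ≤ (n:ℝ)} := fun n =>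
    hyhat_meas measurableSet_Iic
  have main : ∀ n : ℕ, ∀ᵐ ω ∂μ,
      ({ω | yhat ω ≤ (n:ℝ)}).indicator (μ[D | G']) ω ≤ 0 := by
    intro n
    set A := {ω | yhat ω ≤ (n:ℝ)} with hA_def
    set ψ : Ω → ℝ := A.indicator yhat with hψ_def
    have hψ_meas : StronglyMeasurable[G'] ψ :=
      (hyhat_meas.indicator (hA n)).stronglyMeasurable
    have hψ_bdd : ∀ ω, ‖ψ ω‖ ≤ (n:ℝ) := by
      intro ω
      rw [Real.norm_eq_abs]
      by_cases h : ω ∈ A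
      · rw [hψ_def, indicator_of_mem h, abs_of_pos (hyhat_pos ω)]; exact h
      · rw [hψ_def, indicator_of_notMem h]; simp
    have hψ_nonneg : ∀ ω, 0 ≤ ψ ω := fun ω => by
      by_cases h : ω ∈ A
      · rw [hψ_def, indicator_of_mem h]; exact (hyhat_pos ω).le
      · rw [hψ_def, indicator_of_notMem h]
    -- g := ψ * (ZX - ZXhat) is integrable
    have hg_int : Integrable (fun ω => ψ ω * (Z ω * X ω - Z ω * Xhat ω)) μ :=
      hZD_int.bdd_mul ((hψ_meas.mono hG).aestronglyMeasurable) (Eventually.of_forall hψ_bdd)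
    -- conditional expectation of g
    have hcond_g : μ[(fun ω => ψ ω * (Z ω * X ω - Z ω * Xhat ω)) | G'] =ᵐ[μ]
        fun ω => ψ ω * ((μ[fun ω' => Z ω' * X ω' - Z ω' * Xhat ω' | G']) ω) :=
      condExp_mul_of_stronglyMeasurable_left hψ_meas hg_int hZD_int
    have hcond_sub : μ[(fun ω => Z ω * X ω - Z ω * Xhat ω) | G'] =ᵐ[μ]
        (μ[fun ω' => Z ω' * X ω' | G']) - (μ[fun ω' => Z ω' * Xhat ω' | G']) :=
      condExp_sub hX_budget_int hXhat_budget_int G'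
    -- conditional expectation of indicator D
    have hA' : MeasurableSet[m0] A := hG _ (hA n)
    have hind_int : Integrable (A.indicator D) μ := by
      letI : MeasurableSpace Ω := m0
      rw [integrable_indicator_iff hA']
      exact hD_int.integrableOn
    have hcond_ind : μ[A.indicator D | G'] =ᵐ[μ] A.indicator (μ[D | G']) :=
      condExp_indicator hD_int (hA n)
    -- pointwise: indicator A D ≤ g
    have hle : A.indicator D ≤ᵐ[μ] fun ω => ψ ω * (Z ω * X ω - Z ω * Xhat ω) := by
      apply Eventually.of_forall
      intro ω
      by_cases h : ω ∈ A
      · show A.indicator D ω ≤ ψ ω * (Z ω * X ω - Z ω * Xhat ω)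
        rw [indicator_of_mem h, hψ_def, indicator_of_mem h]
        exact key ω
      · show A.indicator D ω ≤ ψ ω * (Z ω * X ω - Z ω * Xhat ω)
        rw [indicator_of_notMem h, hψ_def, indicator_of_notMem h, zero_mul]
    have hmono : μ[A.indicator D | G'] ≤ᵐ[μ]
        μ[(fun ω => ψ ω * (Z ω * X ω - Z ω * Xhat ω)) | G'] :=
      condExp_mono hind_int hg_int hle
    filter_upwards [hmono, hcond_g, hcond_sub, hcond_ind, hX_budget, hXhat_budget]
      with ω h1 h2 h3 h4 h5 h6
    rw [← h4]
    refine le_trans h1 ?_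
    rw [h2]
    have h7 : (μ[fun ω' => Z ω' * X ω' - Z ω' * Xhat ω' | G']) ω ≤ 0 := by
      rw [h3]; simp only [Pi.sub_apply]; rw [h6]; linarith
    exact mul_nonpos_of_nonneg_of_nonpos (hψ_nonneg ω) h7
  have hcondD_nonpos : ∀ᵐ ω ∂μ, (μ[D | G']) ω ≤ 0 := by
    have hall := (ae_all_iff).2 main
    filter_upwards [hall] with ω hω
    obtain ⟨n, hn⟩ := exists_nat_ge (yhat ω)
    have hmem : ω ∈ {ω' | yhat ω' ≤ (n:ℝ)} := hn
    have := hω n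
    rwa [indicator_of_mem hmem] at this
  have hcondD : μ[D | G'] =ᵐ[μ]
      (μ[fun ω' => U (X ω') * a ω' | G']) - (μ[fun ω' => U (Xhat ω') * a ω' | G']) :=
    condExp_sub hX_util_int hXhat_util_int G'
  filter_upwards [hcondD_nonpos, hcondD] with ω h1 h2
  rw [h2] at h1
  simp only [Pi.sub_apply] at h1
  linarith
end

section
/- Let Z and α be strictly positive random variables such that E[Z I(y Z/α)] < ∞ for every y > 0. Then the function f(y) := E[Z I(y Z/α)] is a continuous, strictly decreasing bijection from (0,∞) onto (0,∞); in particular, for every x > 0 there exists a unique ŷ > 0 such that E[Z I(ŷ Z/α)] = x. -/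
open MeasureTheory Set Filter

/-- Let `I : (0,∞) → (0,∞)` be a continuous strictly decreasing bijection with
`I(0⁺) = ∞`, `I(∞) = 0`, and let `Z, α > 0` with `E[Z I(y Z/α)] < ∞` for all `y > 0`. Then
`f(y) := E[Z I(y Z/α)]` is a continuous strictly decreasing bijection from `(0,∞)` onto
`(0,∞)`; in particular for every `x > 0` there is a unique `ŷ > 0` with `f(ŷ) = x`. -/
theorem stmt9
    {Ω : Type*} {m0 : MeasurableSpace Ω} (μ : Measure Ω) [IsProbabilityMeasure μ]
    -- I : (0,∞) → (0,∞) continuous strictly decreasing bijection, I(0⁺) = ∞, I(∞) = 0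
    (I : ℝ → ℝ)
    (hI_cont : ContinuousOn I (Ioi 0))
    (hI_anti : StrictAntiOn I (Ioi 0))
    (hI_bij : BijOn I (Ioi 0) (Ioi 0))
    (hI_0 : Tendsto I (nhdsWithin 0 (Ioi 0)) atTop)
    (hI_inf : Tendsto I atTop (nhds 0))
    -- the strictly positive random variables Z and α
    (Z a : Ω → ℝ) (hZ_meas : Measurable Z) (ha_meas : Measurable a)
    (hZ_pos : ∀ ω, 0 < Z ω) (ha_pos : ∀ ω, 0 < a ω)
    -- E[Z I(y Z/α)] < ∞ for every y > 0
    (hint : ∀ y : ℝ, 0 < y → Integrable (fun ω => Z ω * I (y * Z ω / a ω)) μ)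
    -- f(y) = E[Z I(y Z/α)]
    (f : ℝ → ℝ) (hf : ∀ y : ℝ, f y = ∫ ω, Z ω * I (y * Z ω / a ω) ∂μ) :
    ContinuousOn f (Ioi 0) ∧ StrictAntiOn f (Ioi 0) ∧ BijOn f (Ioi 0) (Ioi 0) ∧
      ∀ x : ℝ, 0 < x → ∃! y : ℝ, 0 < y ∧ f y = x := by
  have harg : ∀ y : ℝ, 0 < y → ∀ ω, 0 < y * Z ω / a ω := fun y hy ω =>
    div_pos (mul_pos hy (hZ_pos ω)) (ha_pos ω)
  have hIpos : ∀ t : ℝ, 0 < t → 0 < I t := fun t ht => hI_bij.mapsTo ht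
  have hgpos : ∀ y : ℝ, 0 < y → ∀ ω, 0 < Z ω * I (y * Z ω / a ω) := fun y hy ω =>
    mul_pos (hZ_pos ω) (hIpos _ (harg y hy ω))
  have hI_le : ∀ s t : ℝ, 0 < s → s ≤ t → I t ≤ I s := by
    intro s t hs hst
    rcases eq_or_lt_of_le hst with rfl | h
    · exact le_refl _
    · exact (hI_anti hs (mem_Ioi.2 (lt_trans hs h)) h).le
  -- the integrand is pointwise monotone decreasing in y
  have hg_mono : ∀ y₁ y₂ : ℝ, 0 < y₁ → y₁ ≤ y₂ → ∀ ω,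
      Z ω * I (y₂ * Z ω / a ω) ≤ Z ω * I (y₁ * Z ω / a ω) := by
    intro y₁ y₂ h₁ h₁₂ ω
    refine mul_le_mul_of_nonneg_left (hI_le _ _ (harg _ h₁ ω) ?_) (hZ_pos ω).le
    exact (div_le_div_iff_of_pos_right (ha_pos ω)).2 (mul_le_mul_of_nonneg_right h₁₂ (hZ_pos ω).le)
  -- strict antitonicity
  have hanti : StrictAntiOn f (Ioi 0) := by
    intro y₁ h₁ y₂ h₂ h₁₂
    rw [hf, hf]
    have hi₁ := hint y₁ h₁
    have hi₂ := hint y₂ h₂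
    have hpos : 0 < ∫ ω, (Z ω * I (y₁ * Z ω / a ω) - Z ω * I (y₂ * Z ω / a ω)) ∂μ := by
      rw [integral_pos_iff_support_of_nonneg
        (fun ω => sub_nonneg.2 (hg_mono y₁ y₂ h₁ h₁₂.le ω)) (hi₁.sub hi₂)]
      have hsupp : Function.support (fun ω => Z ω * I (y₁ * Z ω / a ω)
          - Z ω * I (y₂ * Z ω / a ω)) = Set.univ := by
        refine eq_univ_iff_forall.2 fun ω => ?_
        have : Z ω * I (y₂ * Z ω / a ω) < Z ω * I (y₁ * Z ω / a ω) := by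
          refine mul_lt_mul_of_pos_left ?_ (hZ_pos ω)
          refine hI_anti (harg y₁ h₁ ω) (harg y₂ (lt_trans h₁ h₁₂) ω) ?_
          exact (div_lt_div_iff_of_pos_right (ha_pos ω)).2 (mul_lt_mul_of_pos_right h₁₂ (hZ_pos ω))
        exact ne_of_gt (sub_pos.2 this)
      rw [hsupp]
      simp
    rw [integral_sub hi₁ hi₂] at hpos
    linarith
  -- positivity
  have hfpos : ∀ y : ℝ, 0 < y → 0 < f y := by
    intro y hy
    rw [hf]
    rw [integral_pos_iff_support_of_nonneg (fun ω => (hgpos y hy ω).le) (hint y hy)]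
    have hsupp : Function.support (fun ω => Z ω * I (y * Z ω / a ω)) = Set.univ :=
      eq_univ_iff_forall.2 fun ω => ne_of_gt (hgpos y hy ω)
    rw [hsupp]
    simp
  -- continuity
  have hfe : f = fun y => ∫ ω, Z ω * I (y * Z ω / a ω) ∂μ := funext hf
  have hcont : ContinuousOn f (Ioi 0) := by
    intro y₀ hy₀
    have hy₀' : (0 : ℝ) < y₀ := hy₀
    have hhalf : 0 < y₀ / 2 := half_pos hy₀'
    have hca : ContinuousAt (fun y => ∫ ω, Z ω * I (y * Z ω / a ω) ∂μ) y₀ := by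
      apply continuousAt_of_dominated
        (bound := fun ω => Z ω * I (y₀ / 2 * Z ω / a ω))
      · filter_upwards [eventually_gt_nhds (half_lt_self hy₀')] with y hy
        exact (hint y (lt_trans hhalf hy)).aestronglyMeasurable
      · filter_upwards [eventually_gt_nhds (half_lt_self hy₀')] with y hy
        refine Eventually.of_forall fun ω => ?_
        rw [Real.norm_eq_abs, abs_of_pos (hgpos y (lt_trans hhalf hy) ω)]
        exact hg_mono _ _ hhalf hy.le ω
      · exact hint _ hhalf
      · refine Eventually.of_forall fun ω => ?_
        have h1 : ContinuousAt (fun y : ℝ => y * Z ω / a ω) y₀ :=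
          (continuousAt_id.mul continuousAt_const).div_const _
        have h2 : ContinuousAt I (y₀ * Z ω / a ω) :=
          hI_cont.continuousAt (Ioi_mem_nhds (harg y₀ hy₀' ω))
        have h3 : ContinuousAt (fun y : ℝ => I (y * Z ω / a ω)) y₀ :=
          ContinuousAt.comp (f := fun y : ℝ => y * Z ω / a ω) h2 h1
        exact continuousAt_const.mul h3
    rw [hfe]
    exact hca.continuousWithinAt
  -- limit at infinity
  have htop : Tendsto f atTop (nhds 0) := by
    rw [hfe]
    have h0' : (0 : ℝ) = ∫ _ : Ω, (0 : ℝ) ∂μ := by simp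
    rw [h0']
    apply tendsto_integral_filter_of_dominated_convergence
      (bound := fun ω => Z ω * I (1 * Z ω / a ω))
    · filter_upwards [eventually_gt_atTop (1 : ℝ)] with y hy
      exact (hint y (lt_trans one_pos hy)).aestronglyMeasurable
    · filter_upwards [eventually_ge_atTop (1 : ℝ)] with y hy
      refine Eventually.of_forall fun ω => ?_
      rw [Real.norm_eq_abs, abs_of_pos (hgpos y (lt_of_lt_of_le one_pos hy) ω)]
      exact hg_mono _ _ one_pos hy ω
    · exact hint 1 one_pos
    · refine Eventually.of_forall fun ω => ?_
      have h1 : Tendsto (fun y : ℝ => y * Z ω / a ω) atTop atTop :=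
        (tendsto_id.atTop_mul_const (hZ_pos ω)).atTop_div_const (ha_pos ω)
      have h2 : Tendsto (fun y : ℝ => Z ω * I (y * Z ω / a ω)) atTop (nhds (Z ω * 0)) :=
        (hI_inf.comp h1).const_mul _
      rwa [mul_zero] at h2
  -- limit at zero: f is unbounded
  have hunbdd : ∀ M : ℝ, ∃ y : ℝ, 0 < y ∧ M < f y := by
    intro M
    by_contra hcon
    push_neg at hcon
    set G : ℕ → Ω → ENNReal := fun n ω =>
      ENNReal.ofReal (Z ω * I (1 / (n + 1) * Z ω / a ω)) with hG
    have hnpos : ∀ n : ℕ, (0 : ℝ) < 1 / (n + 1) := fun n =>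
      div_pos one_pos (by positivity)
    have hGmeas : ∀ n, AEMeasurable (G n) μ := fun n =>
      ((hint _ (hnpos n)).aestronglyMeasurable.aemeasurable).ennreal_ofReal
    have hGmono : ∀ ω, Monotone fun n => G n ω := by
      intro ω n m hnm
      refine ENNReal.ofReal_le_ofReal (hg_mono _ _ (hnpos m) ?_ ω)
      have : (n : ℝ) + 1 ≤ (m : ℝ) + 1 := by exact_mod_cast Nat.succ_le_succ hnm
      exact one_div_le_one_div_of_le (by positivity) this
    have hGtop : ∀ ω, ⨆ n, G n ω = ⊤ := by
      intro ω
      have hargt : Tendsto (fun n : ℕ => 1 / (n + 1) * Z ω / a ω) (atTop)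
          (nhdsWithin 0 (Ioi 0)) := by
        apply tendsto_nhdsWithin_of_tendsto_nhds_of_eventually_within
        · have h1 : Tendsto (fun n : ℕ => (1 / (n + 1) : ℝ) * (Z ω / a ω)) atTop
              (nhds (0 * (Z ω / a ω))) :=
            tendsto_one_div_add_atTop_nhds_zero_nat.mul_const _
          rw [zero_mul] at h1
          refine h1.congr fun n => ?_
          rw [mul_div_assoc]
        · exact Eventually.of_forall fun n => harg _ (hnpos n) ω
      have hItop : Tendsto (fun n : ℕ => Z ω * I (1 / (n + 1) * Z ω / a ω)) atTop atTop :=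
        (hI_0.comp hargt).const_mul_atTop (hZ_pos ω)
      have hGt : Tendsto (fun n => G n ω) atTop (nhds ⊤) :=
        ENNReal.tendsto_ofReal_atTop.comp hItop
      refine eq_top_iff.2 ?_
      by_contra hlt
      push_neg at hlt
      obtain ⟨n, hn⟩ := (hGt.eventually (eventually_gt_nhds hlt)).exists
      exact absurd (le_iSup (fun n => G n ω) n) (not_le.2 hn)
    have hMC : ∫⁻ ω, ⨆ n, G n ω ∂μ = ⨆ n, ∫⁻ ω, G n ω ∂μ :=
      lintegral_iSup' hGmeas (Eventually.of_forall hGmono)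
    have hleft : ∫⁻ ω, ⨆ n, G n ω ∂μ = ⊤ := by
      simp only [hGtop]
      simp [lintegral_const]
    have hright : ∀ n, ∫⁻ ω, G n ω ∂μ ≤ ENNReal.ofReal M := by
      intro n
      have := ofReal_integral_eq_lintegral_ofReal (hint _ (hnpos n))
        (Eventually.of_forall fun ω => (hgpos _ (hnpos n) ω).le)
      rw [hG, ← this]
      exact ENNReal.ofReal_le_ofReal (by rw [← hf]; exact hcon _ (hnpos n))
    rw [hleft, eq_comm] at hMC
    have : (⊤ : ENNReal) ≤ ENNReal.ofReal M := hMC ▸ iSup_le hright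
    exact absurd this (by simp [ENNReal.ofReal_lt_top.ne])
  have h0 : Tendsto f (nhdsWithin 0 (Ioi 0)) atTop := by
    rw [tendsto_atTop]
    intro M
    obtain ⟨y₀, hy₀pos, hy₀⟩ := hunbdd M
    filter_upwards [Ioo_mem_nhdsGT_of_mem (Set.mem_Ico.2 ⟨le_refl 0, hy₀pos⟩)] with y hy
    have : f y₀ < f y := hanti (mem_Ioi.2 hy.1) (mem_Ioi.2 hy₀pos) hy.2
    linarith
  -- surjectivity
  have hsurj : SurjOn f (Ioi 0) (Ioi 0) := by
    intro x hx
    have hx' : (0 : ℝ) < x := hx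
    obtain ⟨y₁, hy₁pos, hy₁⟩ : ∃ y, 0 < y ∧ f y < x := by
      have := (htop.eventually (eventually_lt_nhds hx')).and (eventually_gt_atTop (0 : ℝ))
      obtain ⟨y, h1, h2⟩ := this.exists
      exact ⟨y, h2, h1⟩
    obtain ⟨y₀, hy₀pos, hy₀⟩ : ∃ y, 0 < y ∧ x < f y := by
      obtain ⟨y, hy⟩ := hunbdd x
      exact ⟨y, hy.1, hy.2⟩
    have hlt : y₀ < y₁ := by
      by_contra hle
      push_neg at hle
      rcases eq_or_lt_of_le hle with rfl | h
      · linarith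
      · have := hanti (mem_Ioi.2 hy₁pos) (mem_Ioi.2 hy₀pos) h
        linarith
    have hsub : Icc y₀ y₁ ⊆ Ioi 0 := fun t ht => lt_of_lt_of_le hy₀pos ht.1
    have := intermediate_value_Icc' hlt.le (hcont.mono hsub)
    obtain ⟨c, hc, hfc⟩ := this (Set.mem_Icc.2 ⟨hy₁.le, hy₀.le⟩)
    exact ⟨c, hsub hc, hfc⟩
  have hbij : BijOn f (Ioi 0) (Ioi 0) :=
    ⟨fun y hy => hfpos y hy, hanti.injOn, hsurj⟩
  refine ⟨hcont, hanti, hbij, fun x hx => ?_⟩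
  obtain ⟨y, hy, hfy⟩ := hsurj hx
  exact ⟨y, ⟨hy, hfy⟩, fun y' hy' =>
    hbij.injOn (mem_Ioi.2 hy'.1) hy (hy'.2.trans hfy.symm)⟩
end

section
/- Let p < 1, p ≠ 0, and q = p/(1−p). Let G be a sub-σ-algebra of 𝒢, let Z and α be strictly positive random variables with A := E[α^{1/(1−p)} Z^{−q} | G] almost surely finite and strictly positive, and let x be a strictly positive G-measurable random variable. Then for every nonnegative random variable X satisfying the budget constraint E[Z X | G] ≤ x almost surely, one has E[(X^p/p) α | G] ≤ (x^p/p) A^{1−p} almost surely (with the convention X^p/p = −∞ on {X = 0} when p < 0). -/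
open MeasureTheory Set Filter

lemma tangent_rpow (p : ℝ) (hp1 : p < 1) (hp0 : p ≠ 0) {u y : ℝ} (hy : 0 < y) (hu : 0 ≤ u)
    (hu' : p < 0 → 0 < u) :
    u ^ p / p ≤ y ^ p / p + y ^ (p - 1) * (u - y) := by
  have h1p : (0:ℝ) < 1 - p := by linarith
  have hyp : y ^ p = y ^ (p-1) * y := by
    rw [← Real.rpow_add_one hy.ne' (p-1)]; ring_nf
  have hyp' : y ^ (p-1) * y * p = y ^ p * p := by rw [← hyp]
  have hdiv : y ^ p / p * p = y ^ p := div_mul_cancel₀ _ hp0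
  have hdiv' : u ^ p / p * p = u ^ p := div_mul_cancel₀ _ hp0
  rcases lt_or_gt_of_ne hp0 with hneg | hpos
  · -- p < 0
    have hu0 : 0 < u := hu' hneg
    have key := Real.geom_mean_le_arith_mean2_weighted
      (w₁ := 1/(1-p)) (w₂ := -p/(1-p)) (p₁ := u ^ p) (p₂ := y ^ (p-1) * u)
      (by positivity) (div_nonneg (by linarith) h1p.le) (Real.rpow_nonneg hu0.le p)
      (by positivity) (by field_simp; ring)
    have e1 : (p-1) * (-p/(1-p)) = p := by field_simp; ring
    have e2 : p * (1/(1-p)) + (-p/(1-p)) = 0 := by field_simp; ring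
    have hgm : (u ^ p) ^ (1/(1-p)) * (y ^ (p-1) * u) ^ (-p/(1-p)) = y ^ p := by
      rw [← Real.rpow_mul hu0.le, Real.mul_rpow (Real.rpow_nonneg hy.le _) hu0.le,
        ← Real.rpow_mul hy.le, e1, mul_comm (y ^ p) _, ← mul_assoc, ← Real.rpow_add hu0, e2,
        Real.rpow_zero, one_mul]
    rw [hgm] at key
    have h2 : (1-p) * y ^ p ≤ u ^ p + (-p) * (y ^ (p-1) * u) := by
      have := mul_le_mul_of_nonneg_left key h1p.le
      field_simp at this
      linarith
    rw [div_le_iff_of_neg hneg]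
    nlinarith [h2, hyp', hdiv]
  · -- 0 < p
    have key := Real.geom_mean_le_arith_mean2_weighted
      (w₁ := p) (w₂ := 1-p) (p₁ := u * y ^ (p-1)) (p₂ := y ^ p)
      hpos.le h1p.le (mul_nonneg hu (Real.rpow_nonneg hy.le _))
      (Real.rpow_nonneg hy.le p) (by ring)
    have e1 : (p-1) * p + p * (1-p) = 0 := by ring
    have hgm : (u * y ^ (p-1)) ^ p * (y ^ p) ^ (1-p) = u ^ p := by
      rw [Real.mul_rpow hu (Real.rpow_nonneg hy.le _), ← Real.rpow_mul hy.le,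
        ← Real.rpow_mul hy.le, mul_assoc, ← Real.rpow_add hy, e1, Real.rpow_zero, mul_one]
    rw [hgm] at key
    rw [← sub_nonneg]
    have expand : y ^ p / p + y ^ (p-1) * (u - y) - u ^ p / p
        = (p * (u * y ^ (p-1)) + (1-p) * y ^ p - u ^ p) / p := by
      field_simp
      nlinarith [hyp']
    rw [expand]
    exact div_nonneg (by linarith) hpos.le


lemma key_point (p : ℝ) (hp1 : p < 1) (hp0 : p ≠ 0) {c b z u : ℝ}
    (hc : 0 < c) (hb : 0 < b) (hz : 0 < z) (hu : 0 ≤ u) (hu' : p < 0 → 0 < u) :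
    u ^ p / p * b ≤ c ^ p * (1/p - 1) * (b ^ (1/(1-p)) * z ^ (-(p/(1-p))))
      + c ^ (p-1) * (z * u) := by
  have h1p : (0:ℝ) < 1 - p := by linarith
  set y : ℝ := c * (b ^ (1/(1-p)) * z ^ (-(1/(1-p)))) with hy_def
  have hy : 0 < y := by positivity
  have hy_pow : ∀ s : ℝ, y ^ s = c ^ s * b ^ ((1/(1-p)) * s) * z ^ (-(1/(1-p)) * s) := by
    intro s
    rw [hy_def, Real.mul_rpow hc.le (by positivity),
      Real.mul_rpow (by positivity) (by positivity),
      ← Real.rpow_mul hb.le, ← Real.rpow_mul hz.le, mul_assoc]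
  have e1 : (1/(1-p)) * (p-1) = -1 := by field_simp; ring
  have e2 : -(1/(1-p)) * (p-1) = 1 := by field_simp; ring
  have e3 : (1/(1-p)) * p = p/(1-p) := by ring
  have e4 : -(1/(1-p)) * p = -(p/(1-p)) := by ring
  have F1 : y ^ (p-1) * b = c ^ (p-1) * z := by
    rw [hy_pow (p-1), e1, e2, Real.rpow_neg_one, Real.rpow_one]
    field_simp
  have F2 : y ^ p * b = c ^ p * (b ^ (1/(1-p)) * z ^ (-(p/(1-p)))) := by
    rw [hy_pow p, e3, e4]
    have : b ^ (p/(1-p)) * b = b ^ (1/(1-p)) := by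
      rw [← Real.rpow_add_one hb.ne' (p/(1-p))]
      congr 1
      field_simp; ring
    calc c ^ p * b ^ (p/(1-p)) * z ^ (-(p/(1-p))) * b
        = c ^ p * (b ^ (p/(1-p)) * b) * z ^ (-(p/(1-p))) := by ring
      _ = c ^ p * (b ^ (1/(1-p)) * z ^ (-(p/(1-p)))) := by rw [this]; ring
  have t := mul_le_mul_of_nonneg_right (tangent_rpow p hp1 hp0 hy hu hu') hb.le
  have hyy : y ^ (p-1) * y = y ^ p := by
    rw [← Real.rpow_add_one hy.ne' (p-1)]; ring_nf
  calc u ^ p / p * b ≤ (y ^ p / p + y ^ (p-1) * (u - y)) * b := t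
    _ = (y ^ p * b) * (1/p) + (y ^ (p-1) * b) * u - (y ^ (p-1) * y) * b := by ring
    _ = (y ^ p * b) * (1/p) + (y ^ (p-1) * b) * u - (y ^ p * b) := by rw [hyy]
    _ = c ^ p * (b ^ (1/(1-p)) * z ^ (-(p/(1-p)))) * (1/p) + (c ^ (p-1) * z) * u
        - c ^ p * (b ^ (1/(1-p)) * z ^ (-(p/(1-p)))) := by rw [F1, F2]
    _ = c ^ p * (1/p - 1) * (b ^ (1/(1-p)) * z ^ (-(p/(1-p)))) + c ^ (p-1) * (z * u) := by ring


lemma condexp_eq_zero_of_support {Ω : Type*} {m m0 : MeasurableSpace Ω} (hm : m ≤ m0)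
    (μ : Measure Ω) [IsProbabilityMeasure μ]
    {S : Set Ω} (hS : MeasurableSet S)
    {h : Ω → ℝ} (hh_int : Integrable h μ) (hh_nn : 0 ≤ᵐ[μ] h)
    (hsupp : ∀ᵐ ω ∂μ, ω ∉ S → h ω = 0) :
    ∀ᵐ ω ∂μ, (μ[S.indicator (fun _ => (1:ℝ))|m]) ω = 0 → (μ[h|m]) ω = 0 := by
  set φ := μ[S.indicator (fun _ => (1:ℝ))|m] with hφ_def
  have hφ_meas : StronglyMeasurable[m] φ := stronglyMeasurable_condExp
  set T : Set Ω := {ω | φ ω ≤ 0} with hT_def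
  have hT : MeasurableSet[m] T := hφ_meas.measurable measurableSet_Iic
  have hT0 : MeasurableSet T := hm T hT
  have hind : Integrable (S.indicator (fun _ => (1:ℝ))) μ :=
    (integrable_const (1:ℝ)).indicator hS
  have hφ_nn : 0 ≤ᵐ[μ] φ :=
    condExp_nonneg (Eventually.of_forall fun ω => Set.indicator_nonneg (fun _ _ => zero_le_one) ω)
  have hφT : φ =ᵐ[μ.restrict T] 0 := by
    refine (ae_restrict_iff' hT0).2 ?_
    filter_upwards [hφ_nn] with ω hω hωT
    exact le_antisymm hωT hω
  have hST : μ (T ∩ S) = 0 := by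
    have h1 : ∫ ω in T, S.indicator (fun _ => (1:ℝ)) ω ∂μ = ∫ ω in T, φ ω ∂μ :=
      (setIntegral_condExp hm hind hT).symm
    have h2 : ∫ ω in T, φ ω ∂μ = 0 := by
      rw [integral_congr_ae hφT]; simp
    rw [setIntegral_indicator hS, setIntegral_const, smul_eq_mul, mul_one] at h1
    have h3 : (μ (T ∩ S)).toReal = 0 := h1.trans h2
    exact ((ENNReal.toReal_eq_zero_iff _).mp h3).resolve_right (measure_ne_top μ _)
  have hhT : h =ᵐ[μ.restrict T] 0 := by
    refine (ae_restrict_iff' hT0).2 ?_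
    have hST' : ∀ᵐ ω ∂μ, ω ∉ T ∩ S := (compl_mem_ae_iff).mpr hST
    filter_upwards [hsupp, hST'] with ω hω hω' hωT
    by_cases hωS : ω ∈ S
    · exact absurd ⟨hωT, hωS⟩ hω'
    · exact hω hωS
  have hint : ∫ ω in T, (μ[h|m]) ω ∂μ = 0 := by
    rw [setIntegral_condExp hm hh_int hT, integral_congr_ae hhT]; simp
  have hce_nn : 0 ≤ᵐ[μ] μ[h|m] := condExp_nonneg hh_nn
  have hzero : (μ[h|m]) =ᵐ[μ.restrict T] 0 :=
    (setIntegral_eq_zero_iff_of_nonneg_ae (ae_restrict_of_ae hce_nn)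
      integrable_condExp.integrableOn).mp hint
  rw [EventuallyEq, ae_restrict_iff' hT0] at hzero
  filter_upwards [hzero] with ω hω hφω
  exact hω (by simp [hT_def, hφω])

lemma final_algebra (p : ℝ) (hp0 : p ≠ 0) {X A : ℝ} (hx : 0 < X) (hA : 0 < A) :
    (X/A) ^ p * (1/p - 1) * A + (X/A) ^ (p-1) * X = X ^ p / p * A ^ (1-p) := by
  have hd : ∀ s:ℝ, (X/A)^s = X^s * A^(-s) := by
    intro s; rw [Real.div_rpow hx.le hA.le, Real.rpow_neg hA.le, div_eq_mul_inv]
  rw [hd, hd]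
  have h1 : A ^ (-p) * A = A ^ (1-p) := by
    rw [← Real.rpow_add_one hA.ne' (-p)]; ring_nf
  have h2 : X ^ (p-1) * X = X ^ p := by
    rw [← Real.rpow_add_one hx.ne' (p-1)]; ring_nf
  have h3 : A ^ (-(p-1)) = A ^ (1-p) := by ring_nf
  rw [h3]
  linear_combination (1/p - 1) * X ^ p * h1 + A ^ (1-p) * h2

/-- For CRRA utility `U(x) = x^p/p` (`p < 1`, `p ≠ 0`, `q = p/(1−p)`), with
`A := E[α^{1/(1−p)} Z^{−q} | G]` a.s. finite and strictly positive and `x > 0` `G`-measurable,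
every nonnegative `X` with `E[Z X | G] ≤ x` a.s. satisfies
`E[(X^p/p) α | G] ≤ (x^p/p) A^{1−p}` almost surely.
(The convention `X^p/p = −∞` on `{X = 0}` for `p < 0` makes the claim trivial wherever
`{X = 0}` has positive conditional probability; accordingly, when `p < 0` the inequality is
asserted at those `ω` where the conditional probability of `{X = 0}` vanishes.) -/
theorem stmt11
    {Ω : Type*} {m0 : MeasurableSpace Ω} (μ : Measure Ω) [IsProbabilityMeasure μ]
    (G' : MeasurableSpace Ω) (hG : G' ≤ m0)
    (p q : ℝ) (hp1 : p < 1) (hp0 : p ≠ 0) (hq : q = p / (1 - p))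
    -- the strictly positive random variables Z and α
    (Z a : Ω → ℝ) (hZ_pos : ∀ ω, 0 < Z ω) (ha_pos : ∀ ω, 0 < a ω)
    -- A = E[α^{1/(1-p)} Z^{-q} | G], a.s. finite and strictly positive
    (hA_int : Integrable (fun ω => a ω ^ (1 / (1 - p)) * Z ω ^ (-q)) μ)
    (A : Ω → ℝ) (hA : A =ᵐ[μ] μ[fun ω => a ω ^ (1 / (1 - p)) * Z ω ^ (-q) | G'])
    (hA_pos : ∀ᵐ ω ∂μ, 0 < A ω)
    -- the initial wealth x, strictly positive and G-measurable
    (x : Ω → ℝ) (hx_meas : Measurable[G'] x) (hx_pos : ∀ ω, 0 < x ω) :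
    ∀ X : Ω → ℝ, (∀ ω, 0 ≤ X ω) →
      Integrable (fun ω => Z ω * X ω) μ →
      Integrable (fun ω => X ω ^ p / p * a ω) μ →
      (∀ᵐ ω ∂μ, (μ[fun ω' => Z ω' * X ω' | G']) ω ≤ x ω) →
      ∀ᵐ ω ∂μ,
        (0 < p ∨ (μ[({ω' | X ω' = 0}).indicator (fun _ => (1:ℝ)) | G']) ω = 0) →
          (μ[fun ω' => X ω' ^ p / p * a ω' | G']) ω ≤ x ω ^ p / p * A ω ^ (1 - p) := by
  subst hq
  intro X hXnn hZX hf hbud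
  have h1p : (0:ℝ) < 1 - p := by linarith
  -- measurable version of Z * X
  set ZXf : Ω → ℝ := fun ω => Z ω * X ω with hZXf_def
  have hW_sm : StronglyMeasurable[m0] (hZX.1.mk ZXf) := hZX.1.stronglyMeasurable_mk
  set W : Ω → ℝ := hZX.1.mk ZXf with hW_def
  have hW_ae : ZXf =ᵐ[μ] W := hZX.1.ae_eq_mk
  set S' : Set Ω := {ω | W ω = 0} with hS'_def
  have hS' : MeasurableSet[m0] S' := hW_sm.measurable (measurableSet_singleton 0)
  -- indicator a.e. equality
  have hind_eq : ({ω' | X ω' = 0}).indicator (fun _ => (1:ℝ))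
      =ᵐ[μ] S'.indicator (fun _ => (1:ℝ)) := by
    filter_upwards [hW_ae] with ω hω
    have hiff : (X ω = 0) ↔ (W ω = 0) := by
      rw [← hω]
      constructor
      · intro h; rw [hZXf_def]; simp [h]
      · intro h; rcases mul_eq_zero.mp h with h' | h'
        · exact absurd h' (hZ_pos ω).ne'
        · exact h'
    by_cases h : X ω = 0
    · rw [Set.indicator_of_mem (show ω ∈ {ω' | X ω' = 0} from h),
        Set.indicator_of_mem (show ω ∈ S' from hiff.mp h)]
    · rw [Set.indicator_of_notMem (show ω ∉ {ω' | X ω' = 0} from h),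
        Set.indicator_of_notMem (show ω ∉ S' from fun hc => h (hiff.mpr hc))]
  have hcond_ind := condExp_congr_ae (m := G') hind_eq
  -- basic objects
  set h0 : Ω → ℝ := fun ω => a ω ^ (1 / (1 - p)) * Z ω ^ (-(p / (1 - p))) with hh0_def
  set A' : Ω → ℝ := μ[h0|G'] with hA'_def
  have hAA' : A =ᵐ[μ] A' := hA
  have hA'_pos : ∀ᵐ ω ∂μ, 0 < A' ω := by
    filter_upwards [hAA', hA_pos] with ω h1 h2; rw [← h1]; exact h2
  have hA'_meas : StronglyMeasurable[G'] A' := stronglyMeasurable_condExp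
  set c : Ω → ℝ := fun ω => x ω / A' ω with hc_def
  have hc_meas : Measurable[G'] c := hx_meas.div hA'_meas.measurable
  set f : Ω → ℝ := fun ω => X ω ^ p / p * a ω with hf_def
  -- the per-n statement
  have main_n : ∀ n : ℕ, ∀ᵐ ω ∂μ,
      ω ∈ c ⁻¹' (Icc (((n:ℝ)+1))⁻¹ ((n:ℝ)+1)) →
      ((0:ℝ) < p ∨ (μ[S'.indicator (fun _ => (1:ℝ))|G']) ω = 0) →
      (μ[f|G']) ω ≤ x ω ^ p / p * A' ω ^ (1-p) := by
    intro n
    set N : ℝ := (n:ℝ) + 1 with hN_def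
    have hNpos : 0 < N := by positivity
    set B : Set Ω := c ⁻¹' (Icc N⁻¹ N) with hB_def
    have hB : MeasurableSet[G'] B := hc_meas measurableSet_Icc
    have hB0 : MeasurableSet[m0] B := hG B hB
    have hcB : ∀ ω ∈ B, N⁻¹ ≤ c ω ∧ c ω ≤ N := fun ω hω => hω
    have hcBpos : ∀ ω ∈ B, 0 < c ω := fun ω hω =>
      lt_of_lt_of_le (inv_pos.2 hNpos) (hcB ω hω).1
    have hpow_bd : ∀ s : ℝ, ∀ ω ∈ B, ‖c ω ^ s‖ ≤ N ^ |s| := by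
      intro s ω hω
      have h1 : 0 < c ω := hcBpos ω hω
      rw [Real.norm_eq_abs, abs_of_nonneg (Real.rpow_nonneg h1.le s)]
      rcases le_or_gt 0 s with hs | hs
      · rw [abs_of_nonneg hs]
        exact Real.rpow_le_rpow h1.le (hcB ω hω).2 hs
      · calc c ω ^ s ≤ (N⁻¹) ^ s :=
              Real.rpow_le_rpow_of_nonpos (inv_pos.2 hNpos) (hcB ω hω).1 hs.le
          _ = N ^ (-s) := by
              rw [Real.inv_rpow hNpos.le, ← Real.rpow_neg hNpos.le]
          _ = N ^ |s| := by rw [abs_of_neg hs]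
    set k1 : Ω → ℝ := B.indicator (fun ω => c ω ^ p * (1/p - 1)) with hk1_def
    set k2 : Ω → ℝ := B.indicator (fun ω => c ω ^ (p-1)) with hk2_def
    have hk1m : Measurable[G'] k1 :=
      ((hc_meas.pow measurable_const).mul measurable_const).indicator hB
    have hk2m : Measurable[G'] k2 :=
      (hc_meas.pow measurable_const).indicator hB
    have hk1bd : ∀ ω, ‖k1 ω‖ ≤ N ^ |p| * |1/p - 1| := by
      intro ω
      by_cases hω : ω ∈ B
      · rw [hk1_def, Set.indicator_of_mem hω, norm_mul]
        exact mul_le_mul_of_nonneg_right (hpow_bd p ω hω) (norm_nonneg _) |>.trans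
          (le_of_eq rfl)
      · rw [hk1_def, Set.indicator_of_notMem hω]
        simp only [norm_zero]
        positivity
    have hk2bd : ∀ ω, ‖k2 ω‖ ≤ N ^ |p-1| := by
      intro ω
      by_cases hω : ω ∈ B
      · rw [hk2_def, Set.indicator_of_mem hω]
        exact hpow_bd (p-1) ω hω
      · rw [hk2_def, Set.indicator_of_notMem hω]
        simp only [norm_zero]
        positivity
    set s1 : Ω → ℝ := fun ω => k1 ω * h0 ω with hs1_def
    set s2 : Ω → ℝ := fun ω => k2 ω * ZXf ω with hs2_def
    have hk1m0 : Measurable[m0] k1 := hk1m.mono hG le_rfl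
    have hk2m0 : Measurable[m0] k2 := hk2m.mono hG le_rfl
    have hg1 : Integrable s1 μ :=
      hA_int.bdd_mul (hk1m0.aestronglyMeasurable) (Eventually.of_forall hk1bd)
    have hg2 : Integrable s2 μ :=
      hZX.bdd_mul (hk2m0.aestronglyMeasurable) (Eventually.of_forall hk2bd)
    have hfB : Integrable (B.indicator f) μ := hf.indicator hB0
    -- the correction term
    set hcor : Ω → ℝ := S'.indicator (fun ω => max (-(s1 ω)) 0) with hcor_def
    have hcor_nn : ∀ ω, 0 ≤ hcor ω := fun ω =>
      Set.indicator_nonneg (fun _ _ => le_max_right _ _) ω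
    have hcor_supp : ∀ ω, ω ∉ S' → hcor ω = 0 := fun ω h => Set.indicator_of_notMem h _
    have hcor_meas : AEStronglyMeasurable[m0] hcor μ := by
      refine AEMeasurable.aestronglyMeasurable ?_
      exact (((hk1m0.aemeasurable.mul hA_int.1.aemeasurable).neg).max aemeasurable_const).indicator hS'
    have hcor_bd : ∀ ω, ‖hcor ω‖ ≤ ‖s1 ω‖ := by
      intro ω
      by_cases h : ω ∈ S'
      · rw [hcor_def, Set.indicator_of_mem h, Real.norm_eq_abs, Real.norm_eq_abs]
        refine abs_le.2 ⟨?_, ?_⟩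
        · exact le_trans (neg_nonpos.2 (abs_nonneg _)) (le_max_right _ _)
        · exact max_le (neg_le_abs _) (abs_nonneg _)
      · rw [hcor_supp ω h, norm_zero]; exact norm_nonneg _
    have hcor_int : Integrable hcor μ :=
      Integrable.mono hg1 hcor_meas (Eventually.of_forall hcor_bd)
    -- pointwise domination
    have hpt : B.indicator f ≤ᵐ[μ] s1 + s2 + hcor := by
      filter_upwards [hW_ae] with ω hWω
      simp only [Pi.add_apply]
      by_cases hωB : ω ∈ B
      · have hc0 : 0 < c ω := hcBpos ω hωB
        have hk1ω : k1 ω = c ω ^ p * (1/p - 1) := Set.indicator_of_mem hωB _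
        have hk2ω : k2 ω = c ω ^ (p-1) := Set.indicator_of_mem hωB _
        rw [Set.indicator_of_mem hωB]
        by_cases hsp : p < 0 ∧ X ω = 0
        · obtain ⟨hpneg, hX0⟩ := hsp
          have hfω : f ω = 0 := by
            rw [hf_def]; simp only []; rw [hX0, Real.zero_rpow hp0, zero_div, zero_mul]
          have hωS' : ω ∈ S' := by
            rw [hS'_def, Set.mem_setOf_eq, ← hWω, hZXf_def]; simp [hX0]
          have hcorω : hcor ω = max (-(s1 ω)) 0 := Set.indicator_of_mem hωS' _
          have hs2ω : s2 ω = 0 := by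
            rw [hs2_def]; simp only []; rw [hZXf_def]; simp [hX0]
          rw [hfω, hcorω, hs2ω]
          have h1 := le_max_left (-(s1 ω)) 0
          linarith
        · have hu' : p < 0 → 0 < X ω := by
            intro hpn
            rcases (hXnn ω).lt_or_eq with h | h
            · exact h
            · exact absurd ⟨hpn, h.symm⟩ hsp
          have hkey := key_point p hp1 hp0 hc0 (ha_pos ω) (hZ_pos ω) (hXnn ω) hu'
          have : f ω ≤ s1 ω + s2 ω := by
            rw [hf_def, hs1_def, hs2_def]; simp only []
            rw [hk1ω, hk2ω, hh0_def, hZXf_def]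
            exact hkey
          linarith [hcor_nn ω]
      · rw [Set.indicator_of_notMem hωB]
        have hk1ω : k1 ω = 0 := Set.indicator_of_notMem hωB _
        have hk2ω : k2 ω = 0 := Set.indicator_of_notMem hωB _
        have : s1 ω = 0 := by rw [hs1_def]; simp [hk1ω]
        have h2 : s2 ω = 0 := by rw [hs2_def]; simp [hk2ω]
        rw [this, h2]
        simpa using hcor_nn ω
    -- conditional expectation computations
    have hsum_int : Integrable (s1 + s2 + hcor) μ := (hg1.add hg2).add hcor_int
    have Emono : μ[B.indicator f|G'] ≤ᵐ[μ] μ[s1 + s2 + hcor|G'] :=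
      condExp_mono hfB hsum_int hpt
    have E1 : μ[B.indicator f|G'] =ᵐ[μ] B.indicator (μ[f|G']) := condExp_indicator hf hB
    have Eadd1 : μ[s1 + s2 + hcor|G'] =ᵐ[μ] μ[s1 + s2|G'] + μ[hcor|G'] :=
      condExp_add (hg1.add hg2) hcor_int G'
    have Eadd2 : μ[s1 + s2|G'] =ᵐ[μ] μ[s1|G'] + μ[s2|G'] := condExp_add hg1 hg2 G'
    have E3 : μ[s1|G'] =ᵐ[μ] k1 * A' := by
      rw [hA'_def]
      exact condExp_mul_of_stronglyMeasurable_left hk1m.stronglyMeasurable hg1 hA_int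
    have E4 : μ[s2|G'] =ᵐ[μ] k2 * μ[ZXf|G'] :=
      condExp_mul_of_stronglyMeasurable_left hk2m.stronglyMeasurable hg2 hZX
    -- the correction term vanishes where needed
    have Hcor : ∀ᵐ ω ∂μ, ((0:ℝ) < p ∨ (μ[S'.indicator (fun _ => (1:ℝ))|G']) ω = 0) →
        (μ[hcor|G']) ω = 0 := by
      rcases lt_or_gt_of_ne hp0 with hpneg | hppos
      · have := condexp_eq_zero_of_support hG μ hS' hcor_int
          (Eventually.of_forall hcor_nn) (Eventually.of_forall hcor_supp)
        filter_upwards [this] with ω h hor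
        rcases hor with h' | h'
        · exact absurd h' (not_lt.2 hpneg.le)
        · exact h h'
      · have hcor0 : ∀ ω, hcor ω = 0 := by
          intro ω
          by_cases h : ω ∈ S'
          · rw [hcor_def, Set.indicator_of_mem h]
            have hs1nn : 0 ≤ s1 ω := by
              by_cases hω : ω ∈ B
              · have hk : k1 ω = c ω ^ p * (1/p - 1) := Set.indicator_of_mem hω _
                have hcc : 0 < c ω := hcBpos ω hω
                have h1 : (0:ℝ) ≤ 1/p - 1 := by
                  rw [le_sub_iff_add_le, zero_add, le_div_iff₀ hppos, one_mul]
                  exact hp1.le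
                have h2 : 0 < h0 ω := by
                  have := ha_pos ω; have := hZ_pos ω
                  have : 0 < a ω ^ (1 / (1 - p)) * Z ω ^ (-(p / (1 - p))) := by positivity
                  exact this
                have : s1 ω = k1 ω * h0 ω := rfl
                rw [this, hk]
                positivity
              · have hk : k1 ω = 0 := Set.indicator_of_notMem hω _
                have : s1 ω = k1 ω * h0 ω := rfl
                rw [this, hk, zero_mul]
            simp [max_eq_right (neg_nonpos.2 hs1nn)]
          · exact hcor_supp ω h
        have : μ[hcor|G'] =ᵐ[μ] μ[(0 : Ω → ℝ)|G'] :=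
          condExp_congr_ae (Eventually.of_forall (fun ω => hcor0 ω))
        rw [condExp_zero] at this
        filter_upwards [this] with ω h _
        exact h
    -- combine
    filter_upwards [Emono, E1, Eadd1, Eadd2, E3, E4, Hcor, hbud, hA'_pos]
      with ω e_mono e1 ea1 ea2 e3 e4 hcorz hbudω hA'ω hωB hant
    have hk1ω : k1 ω = c ω ^ p * (1/p - 1) := Set.indicator_of_mem hωB _
    have hk2ω : k2 ω = c ω ^ (p-1) := Set.indicator_of_mem hωB _
    have hk2nn : 0 ≤ k2 ω := by
      rw [hk2ω]; exact Real.rpow_nonneg (hcBpos ω hωB).le _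
    have step1 : (μ[f|G']) ω = (B.indicator (μ[f|G'])) ω :=
      (Set.indicator_of_mem hωB _).symm
    have step2 : (B.indicator (μ[f|G'])) ω = (μ[B.indicator f|G']) ω := e1.symm
    have step3 : (μ[B.indicator f|G']) ω ≤ (μ[s1 + s2 + hcor|G']) ω := e_mono
    have step4 : (μ[s1 + s2 + hcor|G']) ω = (μ[s1|G']) ω + (μ[s2|G']) ω + (μ[hcor|G']) ω := by
      rw [ea1, Pi.add_apply, ea2, Pi.add_apply]
    have step5 : (μ[hcor|G']) ω = 0 := hcorz hant
    have step6 : (μ[s1|G']) ω = k1 ω * A' ω := by rw [e3]; rfl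
    have step7 : (μ[s2|G']) ω = k2 ω * (μ[ZXf|G']) ω := by rw [e4]; rfl
    have step8 : k2 ω * (μ[ZXf|G']) ω ≤ k2 ω * x ω :=
      mul_le_mul_of_nonneg_left hbudω hk2nn
    have halg : k1 ω * A' ω + k2 ω * x ω = x ω ^ p / p * A' ω ^ (1-p) := by
      rw [hk1ω, hk2ω, hc_def]
      simp only []
      rw [mul_comm (((x ω / A' ω) ^ p) * (1/p - 1)) (A' ω)] at *
      have := final_algebra p hp0 (hx_pos ω) hA'ω
      linarith [this]
    calc (μ[f|G']) ω = (μ[B.indicator f|G']) ω := step1.trans step2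
      _ ≤ (μ[s1 + s2 + hcor|G']) ω := step3
      _ = (μ[s1|G']) ω + (μ[s2|G']) ω + (μ[hcor|G']) ω := step4
      _ = k1 ω * A' ω + k2 ω * (μ[ZXf|G']) ω := by rw [step5, step6, step7]; ring
      _ ≤ k1 ω * A' ω + k2 ω * x ω := by linarith [step8]
      _ = x ω ^ p / p * A' ω ^ (1-p) := halg
  -- covering
  have cover : ∀ᵐ ω ∂μ, ∃ n : ℕ, ω ∈ c ⁻¹' (Icc (((n:ℝ)+1))⁻¹ ((n:ℝ)+1)) := by
    filter_upwards [hA'_pos] with ω hAω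
    have hcω : 0 < c ω := div_pos (hx_pos ω) hAω
    obtain ⟨n, hn⟩ := exists_nat_ge (max (c ω) (c ω)⁻¹)
    refine ⟨n, ?_⟩
    have h1 : c ω ≤ (n:ℝ) + 1 :=
      le_trans (le_trans (le_max_left _ _) hn) (by linarith)
    have h2 : (c ω)⁻¹ ≤ (n:ℝ) + 1 :=
      le_trans (le_trans (le_max_right _ _) hn) (by linarith)
    have h3 : ((n:ℝ)+1)⁻¹ ≤ c ω := by
      rw [inv_le_comm₀ (by positivity) hcω]
      exact h2
    exact ⟨h3, h1⟩
  have mainAll := (ae_all_iff).2 main_n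
  filter_upwards [mainAll, cover, hAA', hcond_ind] with ω hmain hcov hAω hcind hant
  obtain ⟨n, hn⟩ := hcov
  have hant' : (0:ℝ) < p ∨ (μ[S'.indicator (fun _ => (1:ℝ))|G']) ω = 0 := by
    rcases hant with h | h
    · exact Or.inl h
    · exact Or.inr (by rw [← hcind]; exact h)
  have := hmain n hn hant'
  rw [hAω]
  exact this
end

section
/- Let G be a sub-σ-algebra of 𝒢, let Z and α be strictly positive random variables with E[α | G] and E[α ln(α/Z) | G] almost surely finite, and let x be a strictly positive G-measurable random variable. Then for every nonnegative random variable X with E[Z X | G] ≤ x almost surely, one has E[α ln X | G] ≤ E[α | G] ln( x / E[α | G] ) + E[α ln(α/Z) | G] almost surely, and equality holds for X̂ := (x / E[α | G]) · (α/Z), which satisfies E[Z X̂ | G] = x. -/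
open MeasureTheory Set Filter

lemma aux_pullout_ineq {Ω : Type*} {m0 : MeasurableSpace Ω} {μ : Measure Ω}
    [IsProbabilityMeasure μ] {G' : MeasurableSpace Ω} (hG : G' ≤ m0)
    {φ ψ g : Ω → ℝ} (hφ : Integrable φ μ) (hψ : Integrable ψ μ) (hψ0 : ∀ ω, 0 ≤ ψ ω)
    (hg : StronglyMeasurable[G'] g) (hg0 : ∀ ω, 0 ≤ g ω)
    {A : Set Ω} (hA : MeasurableSet[G'] A)
    (h : ∀ᵐ ω ∂μ, ω ∈ A → φ ω ≤ g ω * ψ ω) :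
    ∀ᵐ ω ∂μ, ω ∈ A → (μ[φ|G']) ω ≤ g ω * (μ[ψ|G']) ω := by
  have key : ∀ n : ℕ, ∀ᵐ ω ∂μ,
      (A ∩ {ω | g ω ≤ (n : ℝ)}).indicator (μ[φ|G']) ω ≤
        (A ∩ {ω | g ω ≤ (n : ℝ)}).indicator g ω * (μ[ψ|G']) ω := by
    intro n
    set An : Set Ω := A ∩ {ω | g ω ≤ (n : ℝ)} with hAn_def
    have hAnm : MeasurableSet[G'] An :=
      hA.inter (hg.measurable measurableSet_Iic)
    have hcn_sm : StronglyMeasurable[G'] (An.indicator g) := hg.indicator hAnm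
    have hcn_bdd : ∀ ω, ‖An.indicator g ω‖ ≤ (n : ℝ) := by
      intro ω
      by_cases hω : ω ∈ An
      · rw [Set.indicator_of_mem hω, Real.norm_eq_abs, abs_of_nonneg (hg0 ω)]
        exact hω.2
      · simp [Set.indicator_of_notMem hω]
    have hcn_sm0 : StronglyMeasurable[m0] (An.indicator g) := hcn_sm.mono hG
    have hprod_int : Integrable (fun ω => An.indicator g ω * ψ ω) μ :=
      hψ.bdd_mul (hcn_sm0.aestronglyMeasurable (μ := μ)) (ae_of_all _ hcn_bdd)
    have hAnm0 : MeasurableSet[m0] An := hG _ hAnm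
    have hind_int : Integrable (An.indicator φ) μ := hφ.indicator hAnm0
    have hle : An.indicator φ ≤ᵐ[μ] fun ω => An.indicator g ω * ψ ω := by
      filter_upwards [h] with ω hω
      by_cases hmem : ω ∈ An
      · rw [Set.indicator_of_mem hmem, Set.indicator_of_mem hmem]
        exact hω hmem.1
      · rw [Set.indicator_of_notMem hmem, Set.indicator_of_notMem hmem, zero_mul]
    have h1 := condExp_mono (m := G') hind_int hprod_int hle
    have h2 := condExp_indicator (m := G') hφ hAnm
    have h3 : μ[(fun ω => An.indicator g ω * ψ ω)|G'] =ᵐ[μ]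
        fun ω => An.indicator g ω * (μ[ψ|G']) ω := by
      have := condExp_mul_of_stronglyMeasurable_left (m := G') hcn_sm
        (by exact hprod_int) hψ
      exact this
    filter_upwards [h1, h2, h3] with ω h1 h2 h3
    calc An.indicator (μ[φ|G']) ω = (μ[An.indicator φ|G']) ω := h2.symm
      _ ≤ (μ[(fun ω => An.indicator g ω * ψ ω)|G']) ω := h1
      _ = An.indicator g ω * (μ[ψ|G']) ω := h3
  filter_upwards [ae_all_iff.2 key, condExp_nonneg (m := G') (ae_of_all _ hψ0)]
    with ω hω hnn hmem
  set n : ℕ := ⌈g ω⌉₊ with hn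
  have hgn : g ω ≤ (n : ℝ) := Nat.le_ceil _
  have hmemn : ω ∈ A ∩ {ω | g ω ≤ (n : ℝ)} := ⟨hmem, hgn⟩
  have := hω n
  rwa [Set.indicator_of_mem hmemn, Set.indicator_of_mem hmemn] at this

/-- For logarithmic utility: with `Z, α > 0`, `E[α | G]` and
`E[α ln(α/Z) | G]` a.s. finite, and `x > 0` `G`-measurable, every nonnegative `X` with
`E[Z X | G] ≤ x` a.s. satisfies
`E[α ln X | G] ≤ E[α | G] ln(x / E[α | G]) + E[α ln(α/Z) | G]` a.s.
(the claim being trivial — `ln X = −∞` — wherever `{X = 0}` has positive conditional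
probability), and equality holds for `X̂ := (x / E[α | G]) (α/Z)`, which satisfies
`E[Z X̂ | G] = x`. -/
theorem stmt12
    {Ω : Type*} {m0 : MeasurableSpace Ω} (μ : Measure Ω) [IsProbabilityMeasure μ]
    (G' : MeasurableSpace Ω) (hG : G' ≤ m0)
    -- the strictly positive random variables Z and α
    (Z a : Ω → ℝ) (hZ_pos : ∀ ω, 0 < Z ω) (ha_pos : ∀ ω, 0 < a ω)
    -- E[α | G] and E[α ln(α/Z) | G] are well defined (a.s. finite)
    (ha_int : Integrable a μ)
    (hlog_int : Integrable (fun ω => a ω * Real.log (a ω / Z ω)) μ)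
    -- B is a strictly positive version of E[α | G]
    (B : Ω → ℝ) (hB : B =ᵐ[μ] μ[a | G']) (hB_pos : ∀ᵐ ω ∂μ, 0 < B ω)
    -- the initial wealth x, strictly positive and G-measurable
    (x : Ω → ℝ) (hx_meas : Measurable[G'] x) (hx_pos : ∀ ω, 0 < x ω)
    -- the candidate optimum X̂ = (x / E[α|G]) (α/Z)
    (Xhat : Ω → ℝ) (hXhat : ∀ ω, Xhat ω = x ω / B ω * (a ω / Z ω))
    (hint1 : Integrable (fun ω => Z ω * Xhat ω) μ)
    (hint2 : Integrable (fun ω => a ω * Real.log (Xhat ω)) μ) :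
    -- the upper bound over the budget set
    (∀ X : Ω → ℝ, (∀ ω, 0 ≤ X ω) →
      Integrable (fun ω => Z ω * X ω) μ →
      Integrable (fun ω => a ω * Real.log (X ω)) μ →
      (∀ᵐ ω ∂μ, (μ[fun ω' => Z ω' * X ω' | G']) ω ≤ x ω) →
      ∀ᵐ ω ∂μ,
        (μ[({ω' | X ω' = 0}).indicator (fun _ => (1:ℝ)) | G']) ω = 0 →
          (μ[fun ω' => a ω' * Real.log (X ω') | G']) ω ≤
            B ω * Real.log (x ω / B ω) + (μ[fun ω' => a ω' * Real.log (a ω' / Z ω') | G']) ω) ∧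
    -- X̂ attains the budget constraint with equality
    μ[fun ω => Z ω * Xhat ω | G'] =ᵐ[μ] x ∧
    -- and attains the upper bound with equality
    μ[fun ω => a ω * Real.log (Xhat ω) | G'] =ᵐ[μ]
      (fun ω => B ω * Real.log (x ω / B ω) +
        (μ[fun ω' => a ω' * Real.log (a ω' / Z ω') | G']) ω) := by
  -- ### Part 2: the budget constraint for Xhat
  have hK_sm : StronglyMeasurable[G'] (fun ω => x ω / (μ[a|G']) ω) :=
    (hx_meas.div (stronglyMeasurable_condExp.measurable)).stronglyMeasurable
  have hZXhat : (fun ω => Z ω * Xhat ω) =ᵐ[μ]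
      (fun ω => x ω / (μ[a|G']) ω) * a := by
    filter_upwards [hB, hB_pos] with ω hBe hBp
    simp only [Pi.mul_apply]
    rw [hXhat ω, ← hBe]
    have hZ0 : Z ω ≠ 0 := (hZ_pos ω).ne'
    have hB0 : B ω ≠ 0 := hBp.ne'
    field_simp
  have hKa_int : Integrable ((fun ω => x ω / (μ[a|G']) ω) * a) μ := hint1.congr hZXhat
  have part2 : μ[fun ω => Z ω * Xhat ω | G'] =ᵐ[μ] x := by
    have e1 := condExp_congr_ae (m := G') hZXhat
    have e2 := condExp_mul_of_stronglyMeasurable_left (m := G') hK_sm hKa_int ha_int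
    filter_upwards [e1, e2, hB, hB_pos] with ω h1 h2 hBe hBp
    rw [h1, h2]
    simp only [Pi.mul_apply]
    rw [← hBe]
    have hB0 : B ω ≠ 0 := hBp.ne'
    field_simp
  -- ### Part 3: the value of the objective at Xhat
  have hL_sm : StronglyMeasurable[G'] (fun ω => Real.log (x ω / (μ[a|G']) ω)) :=
    (Real.measurable_log.comp (hx_meas.div stronglyMeasurable_condExp.measurable)).stronglyMeasurable
  have h3key : (fun ω => a ω * Real.log (Xhat ω)) =ᵐ[μ]
      (fun ω => Real.log (x ω / (μ[a|G']) ω)) * a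
        + fun ω => a ω * Real.log (a ω / Z ω) := by
    filter_upwards [hB, hB_pos] with ω hBe hBp
    have hxB : 0 < x ω / B ω := div_pos (hx_pos ω) hBp
    have haZ : 0 < a ω / Z ω := div_pos (ha_pos ω) (hZ_pos ω)
    simp only [Pi.add_apply, Pi.mul_apply]
    rw [hXhat ω, Real.log_mul hxB.ne' haZ.ne', ← hBe]
    ring
  have hLa_int : Integrable ((fun ω => Real.log (x ω / (μ[a|G']) ω)) * a) μ := by
    refine (hint2.sub hlog_int).congr ?_
    filter_upwards [h3key] with ω h
    simp only [Pi.add_apply, Pi.mul_apply] at h ⊢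
    simp only [Pi.sub_apply]
    linarith
  have part3 : μ[fun ω => a ω * Real.log (Xhat ω) | G'] =ᵐ[μ]
      (fun ω => B ω * Real.log (x ω / B ω) +
        (μ[fun ω' => a ω' * Real.log (a ω' / Z ω') | G']) ω) := by
    have e1 := condExp_congr_ae (m := G') h3key
    have e2 := condExp_add (m := G') hLa_int hlog_int
    have e3 := condExp_mul_of_stronglyMeasurable_left (m := G') hL_sm hLa_int ha_int
    filter_upwards [e1, e2, e3, hB, hB_pos] with ω h1 h2 h3 hBe hBp
    rw [h1, h2, Pi.add_apply, h3, Pi.mul_apply, ← hBe, mul_comm]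
  refine ⟨?_, part2, part3⟩
  intro X hX0 hZX_int haX_int hbud
  -- a measurable version of the zero set of X
  obtain ⟨f0, hf0_sm, hf0_ae⟩ := hZX_int.1
  have hS'm : MeasurableSet[m0] (f0 ⁻¹' {0}) := hf0_sm.measurable (measurableSet_singleton 0)
  have hXS' : ∀ᵐ ω ∂μ, (X ω = 0 ↔ ω ∈ f0 ⁻¹' {0}) := by
    filter_upwards [hf0_ae] with ω h
    simp only [Set.mem_preimage, Set.mem_singleton_iff, ← h]
    constructor
    · intro h0; rw [h0, mul_zero]
    · intro h0
      rcases mul_eq_zero.mp h0 with h0 | h0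
      · exact absurd h0 (hZ_pos ω).ne'
      · exact h0
  have hind_eq : ({ω' | X ω' = 0}).indicator (fun _ => (1:ℝ)) =ᵐ[μ]
      (f0 ⁻¹' {0}).indicator (fun _ => (1:ℝ)) := by
    filter_upwards [hXS'] with ω h
    by_cases h0 : X ω = 0
    · rw [Set.indicator_of_mem (show ω ∈ {ω' | X ω' = 0} from h0),
          Set.indicator_of_mem (h.mp h0)]
    · rw [Set.indicator_of_notMem (show ω ∉ {ω' | X ω' = 0} from h0),
          Set.indicator_of_notMem (fun hm => h0 (h.mpr hm))]
  have hindS'_int : Integrable ((f0 ⁻¹' {0}).indicator fun _ => (1:ℝ)) μ :=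
    (integrable_const (1:ℝ)).indicator hS'm
  set C : Ω → ℝ := μ[({ω' | X ω' = 0}).indicator (fun _ => (1:ℝ)) | G'] with hC_def
  set A : Set Ω := {ω | C ω = 0} with hA_def
  have hA_meas : MeasurableSet[G'] A :=
    stronglyMeasurable_condExp.measurable (measurableSet_singleton 0)
  have hAm0 : MeasurableSet[m0] A := hG _ hA_meas
  have hCeq : C =ᵐ[μ] μ[(f0 ⁻¹' {0}).indicator (fun _ => (1:ℝ)) | G'] :=
    condExp_congr_ae hind_eq
  have hzero : μ (A ∩ f0 ⁻¹' {0}) = 0 := by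
    have h1 : ∫ ω in A, (μ[(f0 ⁻¹' {0}).indicator (fun _ => (1:ℝ)) | G']) ω ∂μ
        = ∫ ω in A, (f0 ⁻¹' {0}).indicator (fun _ => (1:ℝ)) ω ∂μ :=
      setIntegral_condExp hG hindS'_int hA_meas
    have h2 : ∫ ω in A, (μ[(f0 ⁻¹' {0}).indicator (fun _ => (1:ℝ)) | G']) ω ∂μ = 0 := by
      have e : ∫ ω in A, (μ[(f0 ⁻¹' {0}).indicator (fun _ => (1:ℝ)) | G']) ω ∂μ
          = ∫ ω in A, C ω ∂μ :=
        @MeasureTheory.setIntegral_congr_ae Ω ℝ m0 _ _ _ _ _ μ hAm0 (hCeq.mono fun ω h _ => h.symm)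
      rw [e, @MeasureTheory.setIntegral_congr_fun Ω ℝ m0 _ _ C 0 A μ hAm0 (fun ω hω => hω)]
      simp
    have h3 : ∫ ω in A, (f0 ⁻¹' {0}).indicator (fun _ => (1:ℝ)) ω ∂μ
        = (μ (A ∩ f0 ⁻¹' {0})).toReal := by
      rw [@MeasureTheory.setIntegral_indicator Ω ℝ m0 _ _ _ _ _ μ hS'm, @MeasureTheory.setIntegral_const Ω ℝ m0 _ _ _ μ _ (1:ℝ), smul_eq_mul, mul_one, measureReal_def]
    have h4 : (μ (A ∩ f0 ⁻¹' {0})).toReal = 0 := by rw [← h3, ← h1, h2]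
    exact ((ENNReal.toReal_eq_zero_iff _).mp h4).resolve_right (measure_ne_top μ _)
  have hXposA : ∀ᵐ ω ∂μ, ω ∈ A → 0 < X ω := by
    have hae : ∀ᵐ ω ∂μ, ω ∉ A ∩ f0 ⁻¹' {0} :=
      MeasureTheory.measure_eq_zero_iff_ae_notMem.mp hzero
    filter_upwards [hae, hXS'] with ω h1 h2 hA
    rcases (hX0 ω).lt_or_eq with h | h
    · exact h
    · exact absurd ⟨hA, h2.mp h.symm⟩ h1
  -- the pull-out inequality
  have hg_sm : StronglyMeasurable[G'] (fun ω => max ((μ[a|G']) ω) 0 / x ω) :=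
    ((stronglyMeasurable_condExp.measurable.max measurable_const).div hx_meas).stronglyMeasurable
  have hg0 : ∀ ω, 0 ≤ max ((μ[a|G']) ω) 0 / x ω :=
    fun ω => div_nonneg (le_max_right _ _) (hx_pos ω).le
  have hφ_int : Integrable ((fun ω => a ω * Real.log (X ω) - a ω * Real.log (Xhat ω)) + a) μ :=
    (haX_int.sub hint2).add ha_int
  have hψ0 : ∀ ω, 0 ≤ Z ω * X ω := fun ω => mul_nonneg (hZ_pos ω).le (hX0 ω)
  have hpt : ∀ᵐ ω ∂μ, ω ∈ A →
      ((fun ω => a ω * Real.log (X ω) - a ω * Real.log (Xhat ω)) + a) ω ≤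
        (fun ω => max ((μ[a|G']) ω) 0 / x ω) ω * ((fun ω => Z ω * X ω) ω) := by
    filter_upwards [hB, hB_pos, hXposA] with ω hBe hBp hXp hmem
    have hX : 0 < X ω := hXp hmem
    have hXhat_pos : 0 < Xhat ω := by
      rw [hXhat ω]
      exact mul_pos (div_pos (hx_pos ω) hBp) (div_pos (ha_pos ω) (hZ_pos ω))
    have hgω : max ((μ[a|G']) ω) 0 / x ω = B ω / x ω := by
      rw [← hBe, max_eq_left hBp.le]
    have hlog : Real.log (X ω) - Real.log (Xhat ω) ≤ X ω / Xhat ω - 1 := by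
      rw [← Real.log_div hX.ne' hXhat_pos.ne']
      exact Real.log_le_sub_one_of_pos (div_pos hX hXhat_pos)
    have heq : a ω * (X ω / Xhat ω) = B ω / x ω * (Z ω * X ω) := by
      rw [hXhat ω]
      have h1 : B ω ≠ 0 := hBp.ne'
      have h2 : Z ω ≠ 0 := (hZ_pos ω).ne'
      have h3 : x ω ≠ 0 := (hx_pos ω).ne'
      have h4 : a ω ≠ 0 := (ha_pos ω).ne'
      field_simp
    simp only [Pi.add_apply]
    rw [hgω, ← heq]
    nlinarith [mul_le_mul_of_nonneg_left hlog (ha_pos ω).le]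
  have hmain := aux_pullout_ineq hG hφ_int hZX_int hψ0 hg_sm hg0 hA_meas hpt
  have hd1 : μ[(fun ω => a ω * Real.log (X ω) - a ω * Real.log (Xhat ω)) + a | G'] =ᵐ[μ]
      μ[fun ω => a ω * Real.log (X ω) - a ω * Real.log (Xhat ω) | G'] + μ[a | G'] :=
    condExp_add (m := G') (haX_int.sub hint2) ha_int
  have hd2 : μ[fun ω => a ω * Real.log (X ω) - a ω * Real.log (Xhat ω) | G'] =ᵐ[μ]
      μ[fun ω' => a ω' * Real.log (X ω') | G'] - μ[fun ω => a ω * Real.log (Xhat ω) | G'] :=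
    condExp_sub (m := G') haX_int hint2
  have hnn := condExp_nonneg (m := G') (μ := μ)
    (f := fun ω => Z ω * X ω) (ae_of_all _ hψ0)
  filter_upwards [hmain, hd1, hd2, hB, hB_pos, hbud, hnn, part3]
    with ω h1 h2 h3 hBe hBp hb hnnω h4 hC0
  have hAω : ω ∈ A := hC0
  have h5 := h1 hAω
  have hgω : max ((μ[a|G']) ω) 0 / x ω = B ω / x ω := by
    rw [← hBe, max_eq_left hBp.le]
  rw [hgω] at h5
  have hgx : B ω / x ω * x ω = B ω := div_mul_cancel₀ _ (hx_pos ω).ne'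
  have hle2 : B ω / x ω * (μ[fun ω' => Z ω' * X ω' | G']) ω ≤ B ω / x ω * x ω :=
    mul_le_mul_of_nonneg_left hb (div_nonneg hBp.le (hx_pos ω).le)
  simp only [Pi.add_apply, Pi.sub_apply] at h2 h3 h5
  rw [h2, h3] at h5
  have hBa : (μ[a|G']) ω = B ω := hBe.symm
  -- h5 : E[a ln X] ω - E[a ln Xhat] ω + E[a] ω ≤ B/x * E[Z X] ω
  have h6 : (μ[fun ω' => a ω' * Real.log (X ω') | G']) ω ≤
      (μ[fun ω => a ω * Real.log (Xhat ω) | G']) ω := by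
    rw [hBa] at h5
    linarith [hle2, h5, hgx]
  linarith [h6, h4]
end

section
/- Let a ∈ ℝ, b > 0, k > 0, γ ∈ (0,1), and p < 1 with p ≠ 0. Define F(π) := a π − (b/2) π² + (k/p)(1 − γπ)^p on the interval (−∞, 1/γ). Then F is strictly concave on (−∞, 1/γ), F(π) → −∞ as π → −∞, F'(π) → −∞ as π → (1/γ)⁻, and consequently F attains its supremum over (−∞, 1/γ) at a unique point π̂ ∈ (−∞, 1/γ), which is the unique solution of the first-order condition a − b π − γ k (1 − γπ)^{p−1} = 0. -/
open Set Filter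

/-- Let `a ∈ ℝ`, `b > 0`, `k > 0`, `γ ∈ (0,1)`, `p < 1`, `p ≠ 0`, and
`F(π) := a π − (b/2) π² + (k/p)(1 − γπ)^p` on `(−∞, 1/γ)`. Then `F` is strictly concave on
`(−∞, 1/γ)`, `F(π) → −∞` as `π → −∞`, `F'(π) → −∞` as `π → (1/γ)⁻`, and `F` attains its
supremum over `(−∞, 1/γ)` at a unique point `π̂`, the unique solution of the first-order
condition `a − b π − γ k (1 − γπ)^{p−1} = 0`. -/
theorem stmt14
    (a b k γ p : ℝ) (hb : 0 < b) (hk : 0 < k) (hγ0 : 0 < γ) (hγ1 : γ < 1)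
    (hp1 : p < 1) (hp0 : p ≠ 0)
    (F F' : ℝ → ℝ)
    (hF : ∀ π, F π = a * π - b / 2 * π ^ 2 + k / p * (1 - γ * π) ^ p)
    (hF' : ∀ π, F' π = a - b * π - γ * k * (1 - γ * π) ^ (p - 1)) :
    -- F is strictly concave on (−∞, 1/γ)
    StrictConcaveOn ℝ (Iio (1 / γ)) F ∧
    -- F(π) → −∞ as π → −∞
    Tendsto F atBot atBot ∧
    -- F' is the derivative of F on (−∞, 1/γ)
    (∀ π ∈ Iio (1 / γ), HasDerivAt F (F' π) π) ∧
    -- F'(π) → −∞ as π → (1/γ)⁻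
    Tendsto F' (nhdsWithin (1 / γ) (Iio (1 / γ))) atBot ∧
    -- F attains its supremum over (−∞, 1/γ) at a unique point π̂, the unique root of F' = 0
    (∃ πhat ∈ Iio (1 / γ),
      IsMaxOn F (Iio (1 / γ)) πhat ∧ F' πhat = 0 ∧
      (∀ π' ∈ Iio (1 / γ), IsMaxOn F (Iio (1 / γ)) π' → π' = πhat) ∧
      (∀ π' ∈ Iio (1 / γ), F' π' = 0 → π' = πhat)) := by
  have hγc : (0:ℝ) < 1 / γ := by positivity
  have hpos : ∀ π ∈ Iio (1 / γ), 0 < 1 - γ * π := by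
    intro π hπ
    have h := (lt_div_iff₀ hγ0).mp (mem_Iio.mp hπ)
    nlinarith
  -- derivative
  have hderiv : ∀ π ∈ Iio (1 / γ), HasDerivAt F (F' π) π := by
    intro π hπ
    have hx : 0 < 1 - γ * π := hpos π hπ
    have h3 : HasDerivAt (fun π : ℝ => 1 - γ * π) (-γ) π := by
      simpa using ((hasDerivAt_id π).const_mul γ).const_sub 1
    have h4 : HasDerivAt (fun x : ℝ => x ^ p) (p * (1 - γ * π) ^ (p - 1)) (1 - γ * π) :=
      Real.hasDerivAt_rpow_const (Or.inl hx.ne')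
    have h5 : HasDerivAt (fun π : ℝ => (1 - γ * π) ^ p)
        (p * (1 - γ * π) ^ (p - 1) * (-γ)) π := by have := h4.comp π h3; exact this
    have h6 := h5.const_mul (k / p)
    have h1 : HasDerivAt (fun π : ℝ => a * π) a π := by
      simpa using (hasDerivAt_id π).const_mul a
    have h2 : HasDerivAt (fun π : ℝ => b / 2 * π ^ 2) (b / 2 * (2 * π ^ 1)) π :=
      (hasDerivAt_pow 2 π).const_mul (b / 2)
    have h7 := (h1.sub h2).add h6
    have heq : F = fun π => a * π - b / 2 * π ^ 2 + k / p * (1 - γ * π) ^ p := funext hF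
    rw [heq, hF']
    refine HasDerivAt.congr_deriv h7 ?_
    have hkp : k / p * p = k := div_mul_cancel₀ k hp0
    linear_combination (-(γ * (1 - γ * π) ^ (p - 1)) : ℝ) * hkp
  -- F' is strictly antitone on Iio (1/γ)
  have hanti : StrictAntiOn F' (Iio (1 / γ)) := by
    intro x hx y hy hxy
    rw [hF', hF']
    have h1 : 1 - γ * y < 1 - γ * x := by nlinarith
    have h2 : (1 - γ * x) ^ (p - 1) < (1 - γ * y) ^ (p - 1) :=
      Real.rpow_lt_rpow_of_neg (hpos y hy) h1 (by linarith)
    have h3 := mul_lt_mul_of_pos_left h2 (mul_pos hγ0 hk)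
    nlinarith
  have hderiv_eq : ∀ π ∈ Iio (1 / γ), deriv F π = F' π := fun π hπ => (hderiv π hπ).deriv
  have hcontF : ContinuousOn F (Iio (1 / γ)) := fun π hπ =>
    (hderiv π hπ).continuousAt.continuousWithinAt
  have hconc : StrictConcaveOn ℝ (Iio (1 / γ)) F := by
    apply StrictAntiOn.strictConcaveOn_of_deriv (convex_Iio _) hcontF
    rw [interior_Iio]
    intro x hx y hy hxy
    rw [hderiv_eq x hx, hderiv_eq y hy]
    exact hanti hx hy hxy
  -- F → -∞ at -∞
  have htop : Tendsto F atBot atBot := by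
    set C := max (k / p) 0 with hC
    have hC0 : 0 ≤ C := le_max_right _ _
    have hg : Tendsto (fun π : ℝ => C + π * ((a - C * γ) - b / 2 * π)) atBot atBot := by
      apply tendsto_atBot_add_const_left
      apply Tendsto.atBot_mul_atTop₀ tendsto_id
      have h1 : Tendsto (fun π : ℝ => b / 2 * π) atBot atBot :=
        Tendsto.const_mul_atBot (by positivity) tendsto_id
      have h2 : Tendsto (fun π : ℝ => -(b / 2 * π)) atBot atTop := tendsto_neg_atBot_atTop.comp h1
      simpa [sub_eq_add_neg] using tendsto_atTop_add_const_left atBot (a - C * γ) h2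
    apply tendsto_atBot_mono' atBot _ hg
    filter_upwards [eventually_le_atBot (0:ℝ)] with π hπ
    have hx1 : (1:ℝ) ≤ 1 - γ * π := by nlinarith
    have hx0 : (0:ℝ) < 1 - γ * π := by linarith
    have hkey : k / p * (1 - γ * π) ^ p ≤ C * (1 - γ * π) := by
      rcases lt_or_gt_of_ne hp0 with hneg | hposp
      · have h1 : 0 < (1 - γ * π) ^ p := Real.rpow_pos_of_pos hx0 p
        have h2 : k / p < 0 := div_neg_of_pos_of_neg hk hneg
        nlinarith
      · have h1 : (1 - γ * π) ^ p ≤ (1 - γ * π) ^ (1:ℝ) :=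
          Real.rpow_le_rpow_of_exponent_le hx1 hp1.le
        rw [Real.rpow_one] at h1
        have h2 : 0 < k / p := div_pos hk hposp
        have h3 : k / p ≤ C := le_max_left _ _
        calc k / p * (1 - γ * π) ^ p ≤ k / p * (1 - γ * π) := by nlinarith
          _ ≤ C * (1 - γ * π) := by nlinarith
    rw [hF π]
    nlinarith [hkey]
  -- F' → -∞ at (1/γ)⁻
  have hmap : Tendsto (fun π : ℝ => 1 - γ * π) (nhdsWithin (1/γ) (Iio (1/γ))) (nhdsWithin 0 (Ioi (0:ℝ))) := by
    apply tendsto_nhdsWithin_of_tendsto_nhds_of_eventually_within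
    · have hcont : Tendsto (fun π : ℝ => 1 - γ * π) (nhds (1/γ)) (nhds (1 - γ * (1/γ))) :=
        (continuous_const.sub (continuous_const.mul continuous_id)).tendsto _
      have : 1 - γ * (1/γ) = 0 := by field_simp; norm_num
      rw [this] at hcont
      exact hcont.mono_left nhdsWithin_le_nhds
    · exact eventually_mem_nhdsWithin.mono fun π hπ => hpos π hπ
  have hrpow : Tendsto (fun x : ℝ => x ^ (p - 1)) (nhdsWithin 0 (Ioi (0:ℝ))) atTop := by
    have key : Tendsto (fun x : ℝ => x ^ (1 - p)) (nhdsWithin 0 (Ioi (0:ℝ))) (nhdsWithin 0 (Ioi (0:ℝ))) := by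
      apply tendsto_nhdsWithin_of_tendsto_nhds_of_eventually_within
      · have h := (Real.continuousAt_rpow_const 0 (1 - p) (Or.inr (by linarith))).tendsto
        rw [Real.zero_rpow (by intro h'; linarith [sub_eq_zero.mp h'] : (1:ℝ) - p ≠ 0)] at h
        exact h.mono_left nhdsWithin_le_nhds
      · exact eventually_mem_nhdsWithin.mono fun x hx => Real.rpow_pos_of_pos hx _
    have h := tendsto_inv_nhdsGT_zero.comp key
    apply h.congr'
    filter_upwards [eventually_mem_nhdsWithin] with x hx
    have : x ^ (p - 1) = (x ^ (1 - p))⁻¹ := by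
      rw [← Real.rpow_neg (le_of_lt hx)]
      norm_num
    simp [Function.comp, this]
  have hbot : Tendsto F' (nhdsWithin (1/γ) (Iio (1/γ))) atBot := by
    have hu : Tendsto (fun π : ℝ => γ * k * (1 - γ * π) ^ (p - 1))
        (nhdsWithin (1/γ) (Iio (1/γ))) atTop :=
      Tendsto.const_mul_atTop (mul_pos hγ0 hk) (hrpow.comp hmap)
    have hg : Tendsto (fun π : ℝ => a + -(γ * k * (1 - γ * π) ^ (p - 1)))
        (nhdsWithin (1/γ) (Iio (1/γ))) atBot :=
      tendsto_atBot_add_const_left _ a (tendsto_neg_atTop_atBot.comp hu)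
    apply tendsto_atBot_mono' _ _ hg
    have hev : ∀ᶠ π in nhdsWithin (1/γ) (Iio (1/γ)), (0:ℝ) < π := by
      apply eventually_nhdsWithin_of_eventually_nhds
      exact eventually_gt_nhds hγc
    filter_upwards [hev] with π hπ
    rw [hF' π]
    nlinarith [mul_pos hb hπ]
  refine ⟨hconc, htop, hderiv, hbot, ?_⟩
  -- existence of a root of F'
  set π₀ : ℝ := min 0 ((a - γ * k - 1) / b) with hπ₀def
  have hπ₀mem : π₀ ∈ Iio (1/γ) := lt_of_le_of_lt (min_le_left _ _) hγc
  have hπ₀pos : 0 < F' π₀ := by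
    rw [hF' π₀]
    have h0 : π₀ ≤ 0 := min_le_left _ _
    have hx1 : (1:ℝ) ≤ 1 - γ * π₀ := by nlinarith
    have h1 : (1 - γ * π₀) ^ (p - 1) ≤ 1 :=
      Real.rpow_le_one_of_one_le_of_nonpos hx1 (by linarith)
    have h2 : b * π₀ ≤ a - γ * k - 1 := by
      have := min_le_right (0:ℝ) ((a - γ * k - 1) / b)
      calc b * π₀ ≤ b * ((a - γ * k - 1) / b) := by nlinarith
        _ = a - γ * k - 1 := by field_simp
    nlinarith [mul_pos hγ0 hk, mul_le_mul_of_nonneg_left h1 (mul_pos hγ0 hk).le]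
  obtain ⟨π₁, hπ₁neg, hπ₁mem⟩ : ∃ π₁, F' π₁ < 0 ∧ π₁ ∈ Iio (1/γ) := by
    have h1 : ∀ᶠ π in nhdsWithin (1/γ) (Iio (1/γ)), F' π < 0 :=
      hbot.eventually (eventually_lt_atBot 0)
    exact (h1.and eventually_mem_nhdsWithin).exists
  have hlt : π₀ < π₁ := by
    by_contra h
    push_neg at h
    rcases eq_or_lt_of_le h with h | h
    · rw [h] at hπ₁neg; linarith
    · exact absurd (hanti hπ₁mem hπ₀mem h) (by linarith)
  have hcontF' : ContinuousOn F' (Icc π₀ π₁) := by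
    intro π hπ
    have hπmem : π ∈ Iio (1/γ) := lt_of_le_of_lt hπ.2 hπ₁mem
    have hx := hpos π hπmem
    have hlin : ContinuousAt (fun π : ℝ => 1 - γ * π) π :=
      (continuous_const.sub (continuous_const.mul continuous_id)).continuousAt
    have hc1 : ContinuousAt (fun π : ℝ => (1 - γ * π) ^ (p - 1)) π := by
      exact ContinuousAt.comp (g := fun x : ℝ => x ^ (p - 1)) (f := fun π : ℝ => 1 - γ * π)
        (Real.continuousAt_rpow_const _ _ (Or.inl hx.ne')) hlin
    have : ContinuousAt F' π := by
      have heq : F' = fun π => a - b * π - γ * k * (1 - γ * π) ^ (p - 1) := funext hF'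
      rw [heq]
      exact ((continuous_const.sub (continuous_const.mul continuous_id)).continuousAt).sub
        (continuousAt_const.mul hc1)
    exact this.continuousWithinAt
  obtain ⟨πhat, hπhatIcc, hπhatroot⟩ : ∃ x ∈ Icc π₀ π₁, F' x = 0 := by
    have h0 : (0:ℝ) ∈ Icc (F' π₁) (F' π₀) := ⟨hπ₁neg.le, hπ₀pos.le⟩
    have := intermediate_value_Icc' hlt.le hcontF' h0
    obtain ⟨x, hx, hx'⟩ := this
    exact ⟨x, hx, hx'⟩
  have hπhatmem : πhat ∈ Iio (1/γ) := lt_of_le_of_lt hπhatIcc.2 hπ₁mem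
  -- F is strictly increasing left of πhat, strictly decreasing right of it
  have hsub1 : Iic πhat ⊆ Iio (1/γ) := fun x hx =>
    mem_Iio.mpr (lt_of_le_of_lt (mem_Iic.mp hx) (mem_Iio.mp hπhatmem))
  have hmono : StrictMonoOn F (Iic πhat) := by
    apply strictMonoOn_of_deriv_pos (convex_Iic _) (hcontF.mono hsub1)
    intro x hx
    rw [interior_Iic] at hx
    have hxmem : x ∈ Iio (1/γ) := mem_Iio.mpr (lt_trans hx (mem_Iio.mp hπhatmem))
    rw [hderiv_eq x hxmem]
    have := hanti hxmem hπhatmem hx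
    rw [hπhatroot] at this
    linarith
  have hsub2 : Ico πhat (1/γ) ⊆ Iio (1/γ) := fun x hx => hx.2
  have hanti2 : StrictAntiOn F (Ico πhat (1/γ)) := by
    apply strictAntiOn_of_deriv_neg (convex_Ico _ _) (hcontF.mono hsub2)
    intro x hx
    rw [interior_Ico] at hx
    have hxmem : x ∈ Iio (1/γ) := hx.2
    rw [hderiv_eq x hxmem]
    have := hanti hπhatmem hxmem hx.1
    rw [hπhatroot] at this
    linarith
  have hmax : IsMaxOn F (Iio (1/γ)) πhat := by
    intro π hπ
    simp only [mem_setOf_eq]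
    rcases le_or_gt π πhat with h | h
    · rcases eq_or_lt_of_le h with h | h
      · rw [h]
      · exact (hmono (le_of_lt h) (self_mem_Iic) h).le
    · exact (hanti2 ⟨le_refl _, hπhatmem⟩ ⟨h.le, hπ⟩ h).le
  refine ⟨πhat, hπhatmem, hmax, hπhatroot, ?_, ?_⟩
  · intro π' hπ' hπ'max
    by_contra hne
    rcases lt_or_gt_of_ne hne with h | h
    · have h1 : F π' < F πhat := hmono (le_of_lt h) self_mem_Iic h
      have h2 : F πhat ≤ F π' := hπ'max hπhatmem
      linarith
    · have h1 : F π' < F πhat := hanti2 ⟨le_refl _, hπhatmem⟩ ⟨h.le, hπ'⟩ h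
      have h2 : F πhat ≤ F π' := hπ'max hπhatmem
      linarith
  · intro π' hπ' hroot
    exact hanti.injOn hπ' hπhatmem (by rw [hroot, hπhatroot])
end

section
/- Let a ∈ ℝ, b > 0, k > 0, γ ∈ (0,1), and p < 1 with p ≠ 0, and let π̂ ∈ (−∞, 1/γ) be the unique maximizer of F(π) := a π − (b/2) π² + (k/p)(1 − γπ)^p over (−∞, 1/γ). Then π̂ satisfies the two-sided estimate π^M − (γ^p k / b)^{1/(2−p)} ≤ π̂ ≤ π^M, where π^M := min( a/b , 1/γ ). -/
open Set Filter

/-- Let `a ∈ ℝ`, `b > 0`, `k > 0`, `γ ∈ (0,1)`, `p < 1`, `p ≠ 0`, and let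
`π̂ ∈ (−∞, 1/γ)` be the maximizer of `F(π) := a π − (b/2) π² + (k/p)(1 − γπ)^p` over
`(−∞, 1/γ)`. Then `π^M − (γ^p k / b)^{1/(2−p)} ≤ π̂ ≤ π^M`, where `π^M := min(a/b, 1/γ)`. -/
theorem stmt15
    (a b k γ p : ℝ) (hb : 0 < b) (hk : 0 < k) (hγ0 : 0 < γ) (hγ1 : γ < 1)
    (hp1 : p < 1) (hp0 : p ≠ 0)
    (F : ℝ → ℝ)
    (hF : ∀ π, F π = a * π - b / 2 * π ^ 2 + k / p * (1 - γ * π) ^ p)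
    (πhat : ℝ) (hπhat_mem : πhat ∈ Iio (1 / γ))
    (hπhat_max : IsMaxOn F (Iio (1 / γ)) πhat)
    (πM : ℝ) (hπM : πM = min (a / b) (1 / γ)) :
    πM - (γ ^ p * k / b) ^ (1 / (2 - p)) ≤ πhat ∧ πhat ≤ πM := by
  have h2p : (0:ℝ) < 2 - p := by linarith
  set u : ℝ := 1 - γ * πhat with hu_def
  have hπlt : πhat < 1 / γ := hπhat_mem
  have hu : 0 < u := by
    have : γ * πhat < γ * (1 / γ) := by
      exact mul_lt_mul_of_pos_left hπlt hγ0
    rw [mul_one_div, div_self (ne_of_gt hγ0)] at this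
    simp only [hu_def]; linarith
  -- derivative of F at πhat
  have hderiv : HasDerivAt F (a - b * πhat - k * γ * u ^ (p - 1)) πhat := by
    have h1 : HasDerivAt (fun x : ℝ => 1 - γ * x) (-γ) πhat := by
      simpa using ((hasDerivAt_id πhat).const_mul γ).const_sub 1
    have h2 : HasDerivAt (fun x : ℝ => (1 - γ * x) ^ p)
        ((-γ) * p * u ^ (p - 1)) πhat :=
      h1.rpow_const (Or.inl (ne_of_gt hu))
    have h3 := (((hasDerivAt_id πhat).const_mul a).sub
        ((hasDerivAt_pow 2 πhat).const_mul (b / 2))).add (h2.const_mul (k / p))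
    have hFe : F = fun x : ℝ => a * x - b / 2 * x ^ 2 + k / p * (1 - γ * x) ^ p :=
      funext hF
    rw [hFe]
    refine h3.congr_deriv ?_
    field_simp
    ring
  have hloc : IsLocalMax F πhat := hπhat_max.isLocalMax (Iio_mem_nhds hπlt)
  have hd0 : a - b * πhat - k * γ * u ^ (p - 1) = 0 := by
    rw [← hderiv.deriv]; exact hloc.deriv_eq_zero
  have heq : a - b * πhat = k * γ * u ^ (p - 1) := by linarith
  have hup : (0:ℝ) < u ^ (p - 1) := Real.rpow_pos_of_pos hu _
  -- upper bound
  have hub : πhat ≤ πM := by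
    rw [hπM]
    refine le_min ?_ hπlt.le
    have : 0 < a - b * πhat := by
      rw [heq]; positivity
    rw [le_div_iff₀ hb]; linarith
  refine ⟨?_, hub⟩
  -- the constant c
  set c : ℝ := (γ ^ p * k / b) ^ (1 / (2 - p)) with hc_def
  have hbase : 0 < γ ^ p * k / b := by positivity
  have hc : 0 < c := Real.rpow_pos_of_pos hbase _
  have hcpow : c ^ (2 - p) = γ ^ p * k / b := by
    rw [hc_def, ← Real.rpow_mul hbase.le, one_div_mul_cancel (ne_of_gt h2p), Real.rpow_one]
  rw [hπM]
  rcases le_or_gt (a / b) (1 / γ) with hcase | hcase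
  · -- πM = a / b
    rw [min_eq_left hcase]
    by_contra hcon
    push_neg at hcon
    have hπlt2 : πhat < a / b - c := hcon
    have hγab : γ * (a / b) ≤ 1 := by
      have := mul_le_mul_of_nonneg_left hcase hγ0.le
      rwa [mul_one_div, div_self (ne_of_gt hγ0)] at this
    have huc : γ * c < u := by
      have : γ * πhat < γ * (a / b - c) := mul_lt_mul_of_pos_left hπlt2 hγ0
      simp only [hu_def]; nlinarith
    have hlt : u ^ (p - 1) < (γ * c) ^ (p - 1) :=
      Real.rpow_lt_rpow_of_neg (by positivity) huc (by linarith)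
    have hkey : k * γ * (γ * c) ^ (p - 1) = b * c := by
      have h1 : (γ * c) ^ (p - 1) = γ ^ (p - 1) * c ^ (p - 1) :=
        Real.mul_rpow hγ0.le hc.le
      have h2 : γ ^ (p - 1) * γ = γ ^ p := by
        have h := Real.rpow_add hγ0 (p - 1) 1
        rw [Real.rpow_one] at h
        rw [← h]; norm_num
      have h3 : c ^ (2 - p) * c ^ (p - 1) = c := by
        rw [← Real.rpow_add hc]; norm_num
      calc k * γ * (γ * c) ^ (p - 1) = k * (γ ^ (p - 1) * γ) * c ^ (p - 1) := by
            rw [h1]; ring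
        _ = k * γ ^ p * c ^ (p - 1) := by rw [h2]
        _ = b * (γ ^ p * k / b) * c ^ (p - 1) := by
            rw [mul_comm b (γ ^ p * k / b), div_mul_cancel₀ _ (ne_of_gt hb)]; ring
        _ = b * (c ^ (2 - p) * c ^ (p - 1)) := by rw [hcpow]; ring
        _ = b * c := by rw [h3]
    have : a - b * πhat < b * c := by
      rw [heq]
      calc k * γ * u ^ (p - 1) < k * γ * (γ * c) ^ (p - 1) := by
            apply mul_lt_mul_of_pos_left hlt; positivity
        _ = b * c := hkey
    have : πhat * b < (a / b - c) * b := mul_lt_mul_of_pos_right hπlt2 hb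
    rw [sub_mul, div_mul_cancel₀ _ (ne_of_gt hb)] at this
    linarith
  · -- πM = 1 / γ
    rw [min_eq_right hcase.le]
    have hba : b / γ < a := by
      rw [div_lt_iff₀ hγ0]
      have := mul_lt_mul_of_pos_right hcase hb
      rw [div_mul_cancel₀ _ (ne_of_gt hb), one_div, inv_mul_eq_div] at this
      rw [div_lt_iff₀ hγ0] at this
      linarith [this]
    -- k γ² u^{p-1} ≥ b u
    have hγπ : γ * πhat = 1 - u := by simp [hu_def]
    have hkey : b * u ≤ k * γ ^ 2 * u ^ (p - 1) := by
      have h1 : γ * (a - b * πhat) = γ * a - b * (1 - u) := by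
        rw [← hγπ]; ring
      have h2 : γ * (a - b * πhat) = k * γ ^ 2 * u ^ (p - 1) := by
        rw [heq]; ring
      have hγa : b < a * γ := by
        rw [div_lt_iff₀ hγ0] at hba; linarith
      nlinarith [hup]
    have hu2p : u ^ (2 - p) ≤ k * γ ^ 2 / b := by
      have hquot : u ^ (2 - p) = u / u ^ (p - 1) := by
        rw [eq_div_iff (ne_of_gt hup), ← Real.rpow_add hu]
        have he : 2 - p + (p - 1) = 1 := by ring
        rw [he, Real.rpow_one]
      rw [le_div_iff₀ hb, hquot, div_mul_eq_mul_div, div_le_iff₀ hup]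
      nlinarith [hkey]
    have hγc : (γ * c) ^ (2 - p) = k * γ ^ 2 / b := by
      rw [Real.mul_rpow hγ0.le hc.le, hcpow]
      have h2 : γ ^ (2 - p) * γ ^ p = γ ^ (2:ℕ) := by
        rw [← Real.rpow_natCast γ 2, ← Real.rpow_add hγ0]; norm_num
      field_simp
      exact h2
    have hule : u ≤ γ * c := by
      have := hu2p.trans_eq hγc.symm
      exact (Real.rpow_le_rpow_iff hu.le (by positivity) h2p).mp this
    have : 1 - γ * c ≤ γ * πhat := by rw [hγπ]; linarith
    have h1γ : γ * (1 / γ) = 1 := by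
      rw [mul_one_div, div_self (ne_of_gt hγ0)]
    nlinarith [mul_pos hγ0 hc]
end
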